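/- arXiv:2105.03895 — 2 statements merged into one kernel-verified Lean document; each statement's English description precedes it below -/
import Mathlib

section
/- Let n be a positive integer and let α and β be compositions with ℓ(α) ≤ n and ℓ(β) ≤ n. If YQS_α(x_1,…,x_n) = QS_β(x_1,…,x_n), then α = β. -/
open scoped Classical
open MvPolynomial

namespace PaperYR

/-- A filling of a diagram with `m` rows (0-based, indexed from the bottom), where row `i`
has `c i` boxes (0-based column indices), with entries in `{1,…,n}` encoded as `Fin n`
(the value `e : Fin n` encodes the entry `e+1`). -/
def Filling (m n : ℕ) (c : Fin m → ℕ) : Type :=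
  ((i : Fin m) × Fin (c i)) → Fin n

noncomputable instance (m n : ℕ) (c : Fin m → ℕ) : Fintype (Filling m n c) := by
  unfold Filling; infer_instance

/-- The monomial `x^{wt T}` of a filling: the product over all boxes of the variable
indexed by the entry of the box. -/
noncomputable def fmono {m n : ℕ} {c : Fin m → ℕ} (T : Filling m n c) :
    MvPolynomial (Fin n) ℤ :=
  ∏ b : (i : Fin m) × Fin (c i), X (T b)

/-- The monomial of a filling, ignoring the boxes of column `0` (the basement column). -/
noncomputable def fmonoNB {m n : ℕ} {c : Fin m → ℕ} (T : Filling m n c) :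
    MvPolynomial (Fin n) ℤ :=
  ∏ b ∈ Finset.univ.filter (fun b : (i : Fin m) × Fin (c i) => (b.2 : ℕ) ≠ 0), X (T b)

noncomputable def genfun {m n : ℕ} (c : Fin m → ℕ) (P : Filling m n c → Prop) :
    MvPolynomial (Fin n) ℤ :=
  ∑ T ∈ Finset.univ.filter P, fmono T

noncomputable def genfunNB {n : ℕ} (c : Fin n → ℕ) (P : Filling n n c → Prop) :
    MvPolynomial (Fin n) ℤ :=
  ∑ T ∈ Finset.univ.filter P, fmonoNB T

section Preds

variable {m n : ℕ} {c : Fin m → ℕ}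

def RowsWeakIncr (T : Filling m n c) : Prop :=
  ∀ (i : Fin m) (j j' : Fin (c i)), j ≤ j' → T ⟨i, j⟩ ≤ T ⟨i, j'⟩

def RowsWeakDecr (T : Filling m n c) : Prop :=
  ∀ (i : Fin m) (j j' : Fin (c i)), j ≤ j' → T ⟨i, j'⟩ ≤ T ⟨i, j⟩

/-- Every entry of a lower row is strictly smaller than every entry of any higher row. -/
def RowsSeparated (T : Filling m n c) : Prop :=
  ∀ (i i' : Fin m), i < i' → ∀ (j : Fin (c i)) (j' : Fin (c i')), T ⟨i, j⟩ < T ⟨i', j'⟩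

def RowsConstant (T : Filling m n c) : Prop :=
  ∀ (i : Fin m) (j j' : Fin (c i)), T ⟨i, j⟩ = T ⟨i, j'⟩

def FirstColStrictIncr (T : Filling m n c) : Prop :=
  ∀ (i i' : Fin m), i < i' → ∀ (h : 0 < c i) (h' : 0 < c i'), T ⟨i, ⟨0, h⟩⟩ < T ⟨i', ⟨0, h'⟩⟩

def ColumnsDistinct (T : Filling m n c) : Prop :=
  ∀ (i i' : Fin m), i ≠ i' → ∀ (j : Fin (c i)) (j' : Fin (c i')),
    (j : ℕ) = (j' : ℕ) → T ⟨i, j⟩ ≠ T ⟨i', j'⟩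

/-- Columns strictly increase from bottom to top. -/
def ColsStrictIncr (T : Filling m n c) : Prop :=
  ∀ (i i' : Fin m), i < i' → ∀ (j : Fin (c i)) (j' : Fin (c i')),
    (j : ℕ) = (j' : ℕ) → T ⟨i, j⟩ < T ⟨i', j'⟩

/-- Every entry of row `i` (1-based: row `i+1`) is at most its row index. -/
def FlagUpper (T : Filling m n c) : Prop :=
  ∀ (i : Fin m) (j : Fin (c i)), (T ⟨i, j⟩ : ℕ) ≤ (i : ℕ)

/-- Every entry of row `i` (1-based: row `i+1`) is at least its row index. -/
def FlagLower (T : Filling m n c) : Prop :=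
  ∀ (i : Fin m) (j : Fin (c i)), (i : ℕ) ≤ (T ⟨i, j⟩ : ℕ)

/-- Every Type A and Type B triple is an inversion triple. -/
def TriplesAB (T : Filling m n c) : Prop :=
  (∀ (i i' : Fin m), i < i' → c i' ≤ c i →
    ∀ (k : ℕ) (h1 : k + 1 < c i) (h2 : k + 1 < c i'),
      ¬ (T ⟨i', ⟨k + 1, h2⟩⟩ ≤ T ⟨i, ⟨k, Nat.lt_of_succ_lt h1⟩⟩ ∧
         T ⟨i, ⟨k + 1, h1⟩⟩ ≤ T ⟨i', ⟨k + 1, h2⟩⟩)) ∧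
  (∀ (i i' : Fin m), i < i' → c i < c i' →
    ∀ (k : ℕ) (h1 : k + 1 < c i') (h2 : k < c i),
      ¬ (T ⟨i, ⟨k, h2⟩⟩ ≤ T ⟨i', ⟨k, Nat.lt_of_succ_lt h1⟩⟩ ∧
         T ⟨i', ⟨k + 1, h1⟩⟩ ≤ T ⟨i, ⟨k, h2⟩⟩))

/-- Every Type I and Type II Young triple is a Young inversion triple. -/
def TriplesYoung (T : Filling m n c) : Prop :=
  (∀ (i i' : Fin m), i < i' → c i ≤ c i' →
    ∀ (k : ℕ) (h1 : k + 1 < c i') (h2 : k + 1 < c i),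
      ¬ (T ⟨i, ⟨k + 1, h2⟩⟩ ≤ T ⟨i', ⟨k + 1, h1⟩⟩ ∧
         T ⟨i', ⟨k, Nat.lt_of_succ_lt h1⟩⟩ ≤ T ⟨i, ⟨k + 1, h2⟩⟩)) ∧
  (∀ (i i' : Fin m), i < i' → c i' < c i →
    ∀ (k : ℕ) (h1 : k + 1 < c i) (h2 : k < c i'),
      ¬ (T ⟨i', ⟨k, h2⟩⟩ ≤ T ⟨i, ⟨k + 1, h1⟩⟩ ∧
         T ⟨i, ⟨k, Nat.lt_of_succ_lt h1⟩⟩ ≤ T ⟨i', ⟨k, h2⟩⟩))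

end Preds

/-- The first entry of each nonempty row equals its row index. -/
def FirstEntryRowIndex {n : ℕ} {c : Fin n → ℕ} (T : Filling n n c) : Prop :=
  ∀ (i : Fin n) (h : 0 < c i), T ⟨i, ⟨0, h⟩⟩ = i

/-! ### Polynomials indexed by weak compositions (of length `n`, in `n` variables) -/

/-- The key polynomial `κ_a`: generating function of `KSSF(a)`, fillings of `D(rev a)`
with a basement column whose entry in row `i` (1-based) is `n+1-i`. -/
noncomputable def keyPoly (n : ℕ) (a : Fin n → ℕ) : MvPolynomial (Fin n) ℤ :=
  genfunNB (fun i => a i.rev + 1) (fun T =>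
    (∀ i : Fin n, T ⟨i, ⟨0, Nat.succ_pos _⟩⟩ = i.rev) ∧
    RowsWeakDecr T ∧ ColumnsDistinct T ∧ TriplesAB T)

/-- The Young key polynomial `YK_a`: generating function of `YKSSF(a)`, fillings of
`D(rev a)` with a basement column whose entry in row `i` (1-based) is `i`. -/
noncomputable def youngKey (n : ℕ) (a : Fin n → ℕ) : MvPolynomial (Fin n) ℤ :=
  genfunNB (fun i => a i.rev + 1) (fun T =>
    (∀ i : Fin n, T ⟨i, ⟨0, Nat.succ_pos _⟩⟩ = i) ∧
    RowsWeakIncr T ∧ ColumnsDistinct T ∧ TriplesYoung T)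

/-- The Demazure atom `A_a`: generating function of `ASSF(a)`. -/
noncomputable def atom (n : ℕ) (a : Fin n → ℕ) : MvPolynomial (Fin n) ℤ :=
  genfun (n := n) a (fun T =>
    RowsWeakDecr T ∧ ColumnsDistinct T ∧ FirstEntryRowIndex T ∧ TriplesAB T)

/-- The Young atom `YA_a`: generating function of `YASSF(a)`. -/
noncomputable def youngAtom (n : ℕ) (a : Fin n → ℕ) : MvPolynomial (Fin n) ℤ :=
  genfun (n := n) a (fun T =>
    RowsWeakIncr T ∧ ColumnsDistinct T ∧ FirstEntryRowIndex T ∧ TriplesYoung T)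

/-- The fundamental slide polynomial `fs_a`: generating function of `FF(a)`. -/
noncomputable def fslide (n : ℕ) (a : Fin n → ℕ) : MvPolynomial (Fin n) ℤ :=
  genfun (n := n) a (fun T => RowsWeakDecr T ∧ FlagUpper T ∧ RowsSeparated T)

/-- The monomial slide polynomial `ms_a`: generating function of `MF(a)`. -/
noncomputable def mslide (n : ℕ) (a : Fin n → ℕ) : MvPolynomial (Fin n) ℤ :=
  genfun (n := n) a (fun T => RowsWeakDecr T ∧ FlagUpper T ∧ RowsSeparated T ∧ RowsConstant T)

/-- The Young fundamental slide polynomial `yfs_a`: generating function of `YFF(a)`. -/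
noncomputable def yfslide (n : ℕ) (a : Fin n → ℕ) : MvPolynomial (Fin n) ℤ :=
  genfun (n := n) a (fun T => RowsWeakIncr T ∧ FlagLower T ∧ RowsSeparated T)

/-- The Young monomial slide polynomial `yms_a`: generating function of `YMF(a)`. -/
noncomputable def ymslide (n : ℕ) (a : Fin n → ℕ) : MvPolynomial (Fin n) ℤ :=
  genfun (n := n) a (fun T => RowsWeakIncr T ∧ FlagLower T ∧ RowsSeparated T ∧ RowsConstant T)

/-- The fundamental particle `fp_a`: generating function of `LF(a)`. -/
noncomputable def fparticle (n : ℕ) (a : Fin n → ℕ) : MvPolynomial (Fin n) ℤ :=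
  genfun (n := n) a (fun T =>
    RowsWeakDecr T ∧ ColumnsDistinct T ∧ FirstEntryRowIndex T ∧ TriplesAB T ∧ RowsSeparated T)

/-- The Young fundamental particle `yfp_a`: generating function of `YLF(a)`. -/
noncomputable def yfparticle (n : ℕ) (a : Fin n → ℕ) : MvPolynomial (Fin n) ℤ :=
  genfun (n := n) a (fun T =>
    RowsWeakIncr T ∧ ColumnsDistinct T ∧ FirstEntryRowIndex T ∧ TriplesYoung T ∧ RowsSeparated T)

/-- The quasi-key polynomial `QK_a`: generating function of `QF(a)`. -/
noncomputable def quasiKey (n : ℕ) (a : Fin n → ℕ) : MvPolynomial (Fin n) ℤ :=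
  genfun (n := n) a (fun T =>
    RowsWeakDecr T ∧ FlagUpper T ∧ FirstColStrictIncr T ∧ ColumnsDistinct T ∧ TriplesAB T)

/-- The Young quasi-key polynomial `YQK_a`: generating function of `YQF(a)`. -/
noncomputable def youngQuasiKey (n : ℕ) (a : Fin n → ℕ) : MvPolynomial (Fin n) ℤ :=
  genfun (n := n) a (fun T =>
    RowsWeakIncr T ∧ FlagLower T ∧ FirstColStrictIncr T ∧ ColumnsDistinct T ∧ TriplesYoung T)

/-! ### Polynomials indexed by compositions and partitions -/

/-- The shape of a composition (or partition) given as a list: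
row `i` (0-based, from the bottom) has `α.get i` boxes. -/
def cshape (α : List ℕ) : Fin α.length → ℕ := fun i => α.get i

/-- The fundamental quasisymmetric polynomial `F_α(x_1,…,x_n)`, as the generating function
of fundamental reverse composition tableaux. -/
noncomputable def Fqs (n : ℕ) (α : List ℕ) : MvPolynomial (Fin n) ℤ :=
  genfun (n := n) (cshape α) (fun T => RowsWeakDecr T ∧ RowsSeparated T)

/-- The monomial quasisymmetric polynomial `M_α(x_1,…,x_n)`, as the generating function
of monomial reverse composition tableaux. -/
noncomputable def Mqs (n : ℕ) (α : List ℕ) : MvPolynomial (Fin n) ℤ :=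
  genfun (n := n) (cshape α) (fun T => RowsWeakDecr T ∧ RowsSeparated T ∧ RowsConstant T)

/-- The generating function of fundamental Young composition tableaux of shape `α`. -/
noncomputable def FqsYoung (n : ℕ) (α : List ℕ) : MvPolynomial (Fin n) ℤ :=
  genfun (n := n) (cshape α) (fun T => RowsWeakIncr T ∧ RowsSeparated T)

/-- The generating function of monomial Young composition tableaux of shape `α`. -/
noncomputable def MqsYoung (n : ℕ) (α : List ℕ) : MvPolynomial (Fin n) ℤ :=
  genfun (n := n) (cshape α) (fun T => RowsWeakIncr T ∧ RowsSeparated T ∧ RowsConstant T)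

/-- The quasisymmetric Schur polynomial `QS_α(x_1,…,x_n)`: generating function of `RCT(α)`. -/
noncomputable def QSpoly (n : ℕ) (α : List ℕ) : MvPolynomial (Fin n) ℤ :=
  genfun (n := n) (cshape α) (fun T => RowsWeakDecr T ∧ FirstColStrictIncr T ∧ TriplesAB T)

/-- The Young quasisymmetric Schur polynomial `YQS_α(x_1,…,x_n)`:
generating function of `YCT(α)`. -/
noncomputable def YQSpoly (n : ℕ) (α : List ℕ) : MvPolynomial (Fin n) ℤ :=
  genfun (n := n) (cshape α) (fun T => RowsWeakIncr T ∧ FirstColStrictIncr T ∧ TriplesYoung T)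

/-- The Schur polynomial `s_λ(x_1,…,x_n)`: generating function of `SSYT_n(λ)`. -/
noncomputable def schurPoly (n : ℕ) (lam : List ℕ) : MvPolynomial (Fin n) ℤ :=
  genfun (n := n) (cshape lam) (fun T => RowsWeakIncr T ∧ ColsStrictIncr T)

/-! ### Words, Knuth equivalence, keys, compatible sequences -/

/-- Knuth equivalence: the smallest equivalence relation on words generated by the two
elementary Knuth moves. -/
inductive Knuth : List ℕ → List ℕ → Prop
  | rel1 (u v : List ℕ) (x y z : ℕ) (h1 : x ≤ y) (h2 : y < z) :
      Knuth (u ++ x :: z :: y :: v) (u ++ z :: x :: y :: v)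
  | rel2 (u v : List ℕ) (x y z : ℕ) (h1 : x < y) (h2 : y ≤ z) :
      Knuth (u ++ y :: x :: z :: v) (u ++ y :: z :: x :: v)
  | refl (w : List ℕ) : Knuth w w
  | symm {w w' : List ℕ} : Knuth w w' → Knuth w' w
  | trans {w w' w'' : List ℕ} : Knuth w w' → Knuth w' w'' → Knuth w w''

/-- `f(w)`: replace each letter `i` of `w` by `n+1-i`. -/
def fword (n : ℕ) (w : List ℕ) : List ℕ := w.map (fun x => n + 1 - x)

/-- `frev(w) = f(rev(w))`. -/
def frev (n : ℕ) (w : List ℕ) : List ℕ := fword n w.reverse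

/-- The largest part of the weak composition `a`. -/
def maxPart (n : ℕ) (a : Fin n → ℕ) : ℕ := Finset.univ.sup a

/-- The entries of column `j+1` (0-based `j`) of the key `key(a)`, read from top to bottom
(i.e., in decreasing order): the 1-based row indices `i` with `a_i ≥ j+1`. -/
def keyColWord (n : ℕ) (a : Fin n → ℕ) (j : ℕ) : List ℕ :=
  (((List.finRange n).filter (fun i => decide (j + 1 ≤ a i))).reverse).map (fun i => (i : ℕ) + 1)

/-- `col(key(a))`: the column word of `key(a)`, columns read left to right. -/
def colKey (n : ℕ) (a : Fin n → ℕ) : List ℕ :=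
  (List.range (maxPart n a)).flatMap (fun j => keyColWord n a j)

/-- `col_R(key(a))`: the right-to-left column word of `key(a)`. -/
def colRKey (n : ℕ) (a : Fin n → ℕ) : List ℕ :=
  ((List.range (maxPart n a)).reverse).flatMap (fun j => keyColWord n a j)

/-- `w` is a `b`-compatible word (alphabet `{1,…,n}`). -/
def Compatible (n : ℕ) (b w : List ℕ) : Prop :=
  w.length = b.length ∧
  (∀ x ∈ w, 1 ≤ x ∧ x ≤ n) ∧
  (∀ k : ℕ, k + 1 < w.length → w.getD k 0 ≤ w.getD (k + 1) 0) ∧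
  (∀ k : ℕ, k + 1 < b.length → b.getD k 0 < b.getD (k + 1) 0 → w.getD k 0 < w.getD (k + 1) 0) ∧
  (∀ k : ℕ, k < b.length → w.getD k 0 ≤ b.getD k 0)

/-- `w` is the entrywise maximal `b`-compatible word. -/
def IsMaxCompat (n : ℕ) (b w : List ℕ) : Prop :=
  Compatible n b w ∧ ∀ w' : List ℕ, Compatible n b w' → List.Forall₂ (· ≤ ·) w' w

/-! ### Column word factorization, column-frank words, and left keys -/

/-- Split off the longest strictly decreasing prefix of a word. -/
def decRunSplit : List ℕ → List ℕ × List ℕ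
  | [] => ([], [])
  | [x] => ([x], [])
  | x :: y :: r =>
    if y < x then
      let p := decRunSplit (y :: r)
      (x :: p.1, p.2)
    else ([x], y :: r)

def cwfAux : ℕ → List ℕ → List (List ℕ)
  | 0, _ => []
  | _, [] => []
  | Nat.succ fuel, x :: r =>
    let p := decRunSplit (x :: r)
    p.1 :: cwfAux fuel p.2

/-- The column word factorization of `v`: its decomposition into maximal consecutive
strictly decreasing subwords. -/
def cwf (v : List ℕ) : List (List ℕ) := cwfAux v.length v

/-- The column form of `v`: the lengths of the subwords in its column word factorization. -/
def colform (v : List ℕ) : List ℕ := (cwf v).map List.length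

/-- The first subword in the column word factorization of `v`. -/
def firstRun (v : List ℕ) : List ℕ := (cwf v).headD []

/-- The nonzero parts of the conjugate of `sort(a)`. -/
noncomputable def conjParts (n : ℕ) (a : Fin n → ℕ) : List ℕ :=
  (List.range (maxPart n a)).map
    (fun j => (Finset.univ.filter (fun i : Fin n => j + 1 ≤ a i)).card)

/-- `v` is column-frank (for a tableau of shape `sort(a)`): its column form is a
rearrangement of the nonzero parts of the conjugate partition. -/
def ColumnFrank (n : ℕ) (a : Fin n → ℕ) (v : List ℕ) : Prop :=
  List.Perm (colform v) (conjParts n a)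

/-- The column word `col(T)` of a filling `T` (columns top to bottom, left to right),
with the `Fin n`-encoded entries converted to the 1-based letters. -/
def colWordT {n : ℕ} {c : Fin n → ℕ} (T : Filling n n c) : List ℕ :=
  (List.range (Finset.univ.sup c)).flatMap (fun j =>
    ((List.finRange n).reverse).filterMap (fun i =>
      if h : j < c i then some ((T ⟨i, ⟨j, h⟩⟩ : ℕ) + 1) else none))

/-- The number of entries in column `j+1` of `key(a)`. -/
noncomputable def keyColCard (n : ℕ) (a : Fin n → ℕ) (j : ℕ) : ℕ :=
  (Finset.univ.filter (fun i : Fin n => j + 1 ≤ a i)).card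

/-- The set of (1-based) entries in column `j+1` of `key(a)`. -/
noncomputable def keyColFinset (n : ℕ) (a : Fin n → ℕ) (j : ℕ) : Finset ℕ :=
  (Finset.univ.filter (fun i : Fin n => j + 1 ≤ a i)).image (fun i => (i : ℕ) + 1)

/-- `K₋(T) = key(a)`: for each column `j` of `key(a)`, there is a column-frank word
Knuth equivalent to `col(T)` whose first subword has length `λ'_j` and whose first
subword's set of letters is the entry set of column `j` of `key(a)`. -/
def LeftKeyEq (n : ℕ) (a : Fin n → ℕ) {c : Fin n → ℕ} (T : Filling n n c) : Prop :=
  ∀ j < maxPart n a, ∃ v : List ℕ,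
    Knuth v (colWordT T) ∧ ColumnFrank n a v ∧
    (firstRun v).length = keyColCard n a j ∧
    (firstRun v).toFinset = keyColFinset n a j

/-- `K₋(T) ≥ key(a)` entrywise. -/
def LeftKeyGe (n : ℕ) (a : Fin n → ℕ) {c : Fin n → ℕ} (T : Filling n n c) : Prop :=
  ∀ j < maxPart n a, ∃ v : List ℕ,
    Knuth v (colWordT T) ∧ ColumnFrank n a v ∧
    (firstRun v).length = keyColCard n a j ∧
    List.Forall₂ (fun p q => q ≤ p) (((firstRun v).toFinset).sort (· ≤ ·))
      ((keyColFinset n a j).sort (· ≤ ·))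

/-- `sort(a)`: the weakly decreasing rearrangement of `a`. -/
noncomputable def sortDesc (n : ℕ) (a : Fin n → ℕ) : Fin n → ℕ :=
  fun i => (a ∘ Tuple.sort a) i.rev

/-- The word consisting of `a_1` copies of `1`, then `a_2` copies of `2`, etc. -/
def bword (n : ℕ) (a : Fin n → ℕ) : List ℕ :=
  (List.finRange n).flatMap (fun i => List.replicate (a i) ((i : ℕ) + 1))

/-! ### Divided differences and permutations -/

/-- The variable `x_i` (1-based); junk value `0` out of range. -/
noncomputable def xvar (n : ℕ) (i : ℕ) : MvPolynomial (Fin n) ℤ :=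
  if h : 1 ≤ i ∧ i ≤ n then X (⟨i - 1, by omega⟩ : Fin n) else 0

/-- `s_i(f)`: exchange the variables `x_i` and `x_{i+1}` (1-based). -/
noncomputable def swapVars (n : ℕ) (i : ℕ) (f : MvPolynomial (Fin n) ℤ) :
    MvPolynomial (Fin n) ℤ :=
  if h : 1 ≤ i ∧ i < n then
    rename (Equiv.swap (⟨i - 1, by omega⟩ : Fin n) (⟨i, h.2⟩ : Fin n)) f
  else f

/-- The divided difference `∂_i(f)`: the unique polynomial `g` with
`(x_i - x_{i+1}) * g = f - s_i(f)`. -/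
noncomputable def ddiff (n : ℕ) (i : ℕ) (f : MvPolynomial (Fin n) ℤ) :
    MvPolynomial (Fin n) ℤ :=
  if h : ∃ g, (xvar n i - xvar n (i + 1)) * g = f - swapVars n i f then h.choose else 0

/-- `π_i(f) = ∂_i(x_i f)`. -/
noncomputable def piOp (n : ℕ) (i : ℕ) (f : MvPolynomial (Fin n) ℤ) :
    MvPolynomial (Fin n) ℤ :=
  ddiff n i (xvar n i * f)

/-- `π̂_i(f) = -∂_i(x_{i+1} f)`. -/
noncomputable def piHat (n : ℕ) (i : ℕ) (f : MvPolynomial (Fin n) ℤ) :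
    MvPolynomial (Fin n) ℤ :=
  - ddiff n i (xvar n (i + 1) * f)

/-- The automorphism `I` of `ℤ[x_1,…,x_n]` with `I(x_j) = x_{n+1-j}`. -/
noncomputable def Iauto (n : ℕ) (f : MvPolynomial (Fin n) ℤ) : MvPolynomial (Fin n) ℤ :=
  rename Fin.rev f

/-- The adjacent transposition `s_i = (i, i+1)` (1-based) of `Fin n`. -/
def adjSwap (n : ℕ) (i : ℕ) : Equiv.Perm (Fin n) :=
  if h : 1 ≤ i ∧ i < n then Equiv.swap (⟨i - 1, by omega⟩ : Fin n) (⟨i, h.2⟩ : Fin n) else 1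

/-- The permutation `s_{i_1} s_{i_2} ⋯ s_{i_r}` determined by a word of 1-based indices,
composed so that `w(m) = s_{i_1}(s_{i_2}(⋯ s_{i_r}(m)⋯))`. -/
def wordPerm (n : ℕ) (l : List ℕ) : Equiv.Perm (Fin n) := (l.map (adjSwap n)).prod

/-- The (Coxeter) length of a permutation: the minimal length of a word of adjacent
transpositions expressing it. -/
noncomputable def permLen (n : ℕ) (w : Equiv.Perm (Fin n)) : ℕ :=
  sInf {r : ℕ | ∃ l : List ℕ, (∀ i ∈ l, 1 ≤ i ∧ i < n) ∧ wordPerm n l = w ∧ l.length = r}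

/-- `l` is a reduced word for `w` (1-based letters). -/
def IsReducedWord (n : ℕ) (w : Equiv.Perm (Fin n)) (l : List ℕ) : Prop :=
  (∀ i ∈ l, 1 ≤ i ∧ i < n) ∧ wordPerm n l = w ∧ l.length = permLen n w


/-! ### Auxiliary development for the proof -/

section ProofAux

variable {m n : ℕ} {c : Fin m → ℕ}

/-- The weight of a filling, as a finitely supported function. -/
noncomputable def wtF (T : Filling m n c) : Fin n →₀ ℕ :=
  ∑ b : (i : Fin m) × Fin (c i), Finsupp.single (T b) 1

lemma box_ext {i i' : Fin m} {j : Fin (c i)} {j' : Fin (c i')}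
    (h1 : i = i') (h2 : (j : ℕ) = (j' : ℕ)) :
    (⟨i, j⟩ : (i : Fin m) × Fin (c i)) = ⟨i', j'⟩ := by
  subst h1
  exact congrArg (Sigma.mk i) (Fin.ext h2)

lemma prod_X_eq {B : Type*} [Fintype B] (f : B → Fin n) (s : Finset B) :
    (∏ b ∈ s, (X (f b) : MvPolynomial (Fin n) ℤ))
      = monomial (∑ b ∈ s, Finsupp.single (f b) 1) (1 : ℤ) := by
  classical
  induction s using Finset.induction_on with
  | empty => simp
  | @insert a s ha ih =>
    rw [Finset.prod_insert ha, Finset.sum_insert ha, ih,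
      show (X (f a) : MvPolynomial (Fin n) ℤ) = monomial (Finsupp.single (f a) 1) 1 from rfl,
      monomial_mul, one_mul]

lemma fmono_eq (T : Filling m n c) : fmono T = monomial (wtF T) (1 : ℤ) :=
  prod_X_eq T Finset.univ

/-- The number of fillings satisfying `P` with weight `d`. -/
noncomputable def cnt (P : Filling m n c → Prop) (d : Fin n →₀ ℕ) : ℕ :=
  (Finset.univ.filter fun T : Filling m n c => P T ∧ wtF T = d).card

lemma cnt_pos_of_mem {P : Filling m n c → Prop} {d : Fin n →₀ ℕ}
    (T0 : Filling m n c) (h : P T0 ∧ wtF T0 = d) : 0 < cnt P d := by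
  apply Finset.card_pos.mpr
  exact ⟨T0, Finset.mem_filter.mpr ⟨Finset.mem_univ _, h⟩⟩

lemma exists_of_cnt_pos {P : Filling m n c → Prop} {d : Fin n →₀ ℕ}
    (h : 0 < cnt P d) : ∃ T : Filling m n c, P T ∧ wtF T = d := by
  obtain ⟨T, hT⟩ := Finset.card_pos.mp h
  exact ⟨T, (Finset.mem_filter.mp hT).2⟩

lemma coeff_genfun (P : Filling m n c → Prop) (d : Fin n →₀ ℕ) :
    MvPolynomial.coeff d (genfun c P) = (cnt P d : ℤ) := by
  classical
  unfold genfun cnt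
  rw [MvPolynomial.coeff_sum]
  rw [Finset.sum_congr rfl (fun T _ => by rw [fmono_eq, MvPolynomial.coeff_monomial])]
  rw [Finset.sum_boole, Finset.filter_filter]

lemma wtF_apply (T : Filling m n c) (v : Fin n) :
    wtF T v = (Finset.univ.filter fun b : (i : Fin m) × Fin (c i) => T b = v).card := by
  classical
  have h : (wtF T) v
      = ∑ b : (i : Fin m) × Fin (c i), (Finsupp.single (T b) 1 : Fin n →₀ ℕ) v :=
    map_sum (Finsupp.applyAddHom (M := ℕ) v) _ Finset.univ
  rw [h]
  simp only [Finsupp.single_apply]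
  convert (Finset.card_filter (fun b : (i : Fin m) × Fin (c i) => T b = v) Finset.univ).symm

/-- The canonical filling: every box of row `i` is filled with entry `i`. -/
def rowFill (c : Fin m → ℕ) (h : m ≤ n) : Filling m n c := fun b => Fin.castLE h b.1

lemma rowFill_rowsWeakIncr (h : m ≤ n) : RowsWeakIncr (rowFill c h) :=
  fun _ _ _ _ => le_refl _

lemma rowFill_rowsWeakDecr (h : m ≤ n) : RowsWeakDecr (rowFill c h) :=
  fun _ _ _ _ => le_refl _

lemma rowFill_firstCol (h : m ≤ n) : FirstColStrictIncr (rowFill c h) := by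
  intro i i' hlt _ _
  exact hlt

lemma rowFill_triplesYoung (h : m ≤ n) : TriplesYoung (rowFill c h) := by
  constructor
  · rintro i i' hlt - k h1 h2 ⟨-, hc2⟩
    rw [Fin.le_def] at hc2
    simp only [rowFill, Fin.coe_castLE] at hc2
    have := Fin.lt_def.mp hlt
    omega
  · rintro i i' hlt - k h1 h2 ⟨hc1, -⟩
    rw [Fin.le_def] at hc1
    simp only [rowFill, Fin.coe_castLE] at hc1
    have := Fin.lt_def.mp hlt
    omega

lemma rowFill_triplesAB (h : m ≤ n) : TriplesAB (rowFill c h) := by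
  constructor
  · rintro i i' hlt - k h1 h2 ⟨hc1, -⟩
    rw [Fin.le_def] at hc1
    simp only [rowFill, Fin.coe_castLE] at hc1
    have := Fin.lt_def.mp hlt
    omega
  · rintro i i' hlt - k h1 h2 ⟨-, hc2⟩
    rw [Fin.le_def] at hc2
    simp only [rowFill, Fin.coe_castLE] at hc2
    have := Fin.lt_def.mp hlt
    omega

lemma rowFill_cd (h : m ≤ n) : ColumnsDistinct (rowFill c h) := by
  intro i i' hne j j' _ heq
  exact hne (Fin.ext (by simpa [rowFill, Fin.ext_iff] using heq))

lemma wtF_rowFill (h : m ≤ n) (v : Fin n) :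
    wtF (rowFill c h) v = if hv : (v : ℕ) < m then c ⟨(v : ℕ), hv⟩ else 0 := by
  classical
  rw [wtF_apply, Finset.card_filter, ← Finset.univ_sigma_univ, Finset.sum_sigma]
  have key : ∀ i : Fin m,
      (∑ j ∈ (Finset.univ : Finset (Fin (c i))),
        if rowFill c h ⟨i, j⟩ = v then (1 : ℕ) else 0)
        = if (i : ℕ) = (v : ℕ) then c i else 0 := by
    intro i
    by_cases hiv : (i : ℕ) = (v : ℕ)
    · have hrv : ∀ j : Fin (c i), rowFill c h ⟨i, j⟩ = v := by
        intro j; exact Fin.ext (by simpa [rowFill] using hiv)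
      simp [hrv, hiv]
    · have hrv : ∀ j : Fin (c i), ¬(rowFill c h ⟨i, j⟩ = v) := by
        intro j hj
        exact hiv (by simpa [rowFill, Fin.ext_iff] using hj)
      simp [hrv, hiv]
  trans ∑ i : Fin m, (if (i : ℕ) = (v : ℕ) then c i else 0)
  · exact Finset.sum_congr rfl (fun i _ => by convert key i)
  by_cases hv : (v : ℕ) < m
  · rw [dif_pos hv]
    rw [Finset.sum_eq_single (⟨(v : ℕ), hv⟩ : Fin m)]
    · simp
    · intro i _ hiv
      rw [if_neg]
      intro hcon
      exact hiv (Fin.ext hcon)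
    · intro hcon; exact absurd (Finset.mem_univ _) hcon
  · rw [dif_neg hv]
    apply Finset.sum_eq_zero
    intro i _
    rw [if_neg]
    intro hcon
    exact hv (hcon ▸ i.isLt)

lemma pairwise_strict_le {f : Fin m → Fin n}
    (hf : ∀ i i' : Fin m, i < i' → f i < f i') :
    ∀ i : Fin m, (i : ℕ) ≤ (f i : ℕ) := by
  have H : ∀ k (hk : k < m), k ≤ (f ⟨k, hk⟩ : ℕ) := by
    intro k
    induction k with
    | zero => intro hk; exact Nat.zero_le _
    | succ s ih =>
      intro hk
      have hs : s < m := Nat.lt_of_succ_lt hk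
      have h1 : f ⟨s, hs⟩ < f ⟨s + 1, hk⟩ := hf _ _ (by simp [Fin.lt_def])
      have h2 := ih hs
      have h3 := Fin.lt_def.mp h1
      omega
  intro i
  have := H (i : ℕ) i.isLt
  simpa using this

lemma pairwise_strict_packed {f : Fin m → Fin n}
    (hf : ∀ i i' : Fin m, i < i' → f i < f i') (hp : ∀ i, (f i : ℕ) < m) :
    ∀ i : Fin m, (f i : ℕ) = (i : ℕ) := by
  have H : ∀ t k (hk : k < m), m - 1 - k = t → (f ⟨k, hk⟩ : ℕ) ≤ k := by
    intro t
    induction t with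
    | zero =>
      intro k hk hkt
      have := hp ⟨k, hk⟩
      omega
    | succ s ih =>
      intro k hk hkt
      have hk1 : k + 1 < m := by omega
      have h1 : f ⟨k, hk⟩ < f ⟨k + 1, hk1⟩ := hf _ _ (by simp [Fin.lt_def])
      have h2 := ih (k + 1) hk1 (by omega)
      have h3 := Fin.lt_def.mp h1
      omega
  intro i
  have h1 := pairwise_strict_le hf i
  have h2 := H (m - 1 - (i : ℕ)) (i : ℕ) i.isLt rfl
  have h3 : (f ⟨(i : ℕ), i.isLt⟩ : ℕ) = (f i : ℕ) := by congr
  omega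

lemma firstcol_ge {T : Filling m n c} (hf : FirstColStrictIncr T) (hc : ∀ i, 0 < c i) :
    ∀ i : Fin m, (i : ℕ) ≤ (T ⟨i, ⟨0, hc i⟩⟩ : ℕ) := by
  exact pairwise_strict_le (f := fun i => T ⟨i, ⟨0, hc i⟩⟩)
    (fun i i' h => hf i i' h (hc i) (hc i'))

lemma yct_entry_ge {T : Filling m n c} (hr : RowsWeakIncr T) (hf : FirstColStrictIncr T)
    (hc : ∀ i, 0 < c i) :
    ∀ b : (i : Fin m) × Fin (c i), (b.1 : ℕ) ≤ (T b : ℕ) := by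
  rintro ⟨i, j⟩
  show (i : ℕ) ≤ (T ⟨i, j⟩ : ℕ)
  have h1 := firstcol_ge hf hc i
  have h2 : T ⟨i, ⟨0, hc i⟩⟩ ≤ T ⟨i, j⟩ := hr i ⟨0, hc i⟩ j (by simp [Fin.le_def])
  have h3 := Fin.le_def.mp h2
  omega

lemma firstcol_packed {T : Filling m n c} (hf : FirstColStrictIncr T) (hc : ∀ i, 0 < c i)
    (hp : ∀ b : (i : Fin m) × Fin (c i), (T b : ℕ) < m) :
    ∀ i : Fin m, (T ⟨i, ⟨0, hc i⟩⟩ : ℕ) = (i : ℕ) := by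
  exact pairwise_strict_packed (f := fun i => T ⟨i, ⟨0, hc i⟩⟩)
    (fun i i' h => hf i i' h (hc i) (hc i')) (fun i => hp _)

/-- Triple conditions imply that no column of a Young composition tableau
contains a repeated entry. -/
lemma cd_of_yct {T : Filling m n c} (hr : RowsWeakIncr T) (hf : FirstColStrictIncr T)
    (ht : TriplesYoung T) : ColumnsDistinct T := by
  have main : ∀ (i i' : Fin m), i < i' → ∀ (j : Fin (c i)) (j' : Fin (c i')),
      (j : ℕ) = (j' : ℕ) → T ⟨i, j⟩ ≠ T ⟨i', j'⟩ := by
    intro i i' hlt j j' hjj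
    by_cases hcc : c i' < c i
    · -- strictly increasing column on the overlap
      have aux : ∀ jv, ∀ (h' : jv < c i'),
          T ⟨i, ⟨jv, h'.trans hcc⟩⟩ < T ⟨i', ⟨jv, h'⟩⟩ := by
        intro jv
        induction jv with
        | zero => intro h'; exact hf i i' hlt (h'.trans hcc) h'
        | succ k ih =>
          intro h'
          by_contra hle
          push_neg at hle
          have h2 : k < c i' := Nat.lt_of_succ_lt h'
          have htr := ht.2 i i' hlt hcc k (h'.trans hcc) h2
          apply htr
          constructor
          · exact le_trans (hr i' ⟨k, h2⟩ ⟨k + 1, h'⟩ (by simp [Fin.le_def])) hle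
          · exact le_of_lt (ih h2)
      intro heq
      have h' := j'.isLt
      have hx := aux (j' : ℕ) h'
      have e1 : (⟨(j' : ℕ), h'⟩ : Fin (c i')) = j' := Fin.ext rfl
      have e2 : (⟨(j' : ℕ), h'.trans hcc⟩ : Fin (c i)) = j := Fin.ext hjj.symm
      rw [e1, e2] at hx
      exact absurd heq (ne_of_lt hx)
    · push_neg at hcc
      intro heq
      rcases Nat.eq_zero_or_eq_succ_pred (j : ℕ) with hj0 | hjs
      · -- first column
        have h0i : 0 < c i := lt_of_le_of_lt (Nat.zero_le _) j.isLt
        have h0i' : 0 < c i' := lt_of_le_of_lt (Nat.zero_le _) j'.isLt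
        have hx := hf i i' hlt h0i h0i'
        have e1 : (⟨0, h0i⟩ : Fin (c i)) = j := Fin.ext hj0.symm
        have e2 : (⟨0, h0i'⟩ : Fin (c i')) = j' := Fin.ext (by omega)
        rw [e1, e2] at hx
        exact absurd heq (ne_of_lt hx)
      · set k := (j : ℕ) - 1 with hk
        have hjk : (j : ℕ) = k + 1 := by omega
        have h2 : k + 1 < c i := hjk ▸ j.isLt
        have h1 : k + 1 < c i' := by
          have := j'.isLt; omega
        have htr := ht.1 i i' hlt hcc k h1 h2
        apply htr
        have e2 : (⟨k + 1, h2⟩ : Fin (c i)) = j := Fin.ext hjk.symm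
        have e1 : (⟨k + 1, h1⟩ : Fin (c i')) = j' := Fin.ext (by omega)
        constructor
        · rw [e1, e2]; exact le_of_eq heq
        · rw [e2, heq, ← e1]
          exact hr i' ⟨k, Nat.lt_of_succ_lt h1⟩ ⟨k + 1, h1⟩ (by simp [Fin.le_def])
  intro i i' hne j j' hjj
  rcases lt_or_gt_of_ne hne with h | h
  · exact main i i' h j j' hjj
  · exact fun heq => (main i' i h j' j hjj.symm) heq.symm

/-- Triple conditions imply that no column of a reverse composition tableau
contains a repeated entry. -/
lemma cd_of_rct {T : Filling m n c} (hr : RowsWeakDecr T) (hf : FirstColStrictIncr T)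
    (ht : TriplesAB T) : ColumnsDistinct T := by
  have main : ∀ (i i' : Fin m), i < i' → ∀ (j : Fin (c i)) (j' : Fin (c i')),
      (j : ℕ) = (j' : ℕ) → T ⟨i, j⟩ ≠ T ⟨i', j'⟩ := by
    intro i i' hlt j j' hjj
    by_cases hcc : c i < c i'
    · -- strictly increasing column on the overlap
      have aux : ∀ jv, ∀ (h' : jv < c i),
          T ⟨i, ⟨jv, h'⟩⟩ < T ⟨i', ⟨jv, h'.trans hcc⟩⟩ := by
        intro jv
        induction jv with
        | zero => intro h'; exact hf i i' hlt h' (h'.trans hcc)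
        | succ k ih =>
          intro h'
          by_contra hle
          push_neg at hle
          have h2 : k < c i := Nat.lt_of_succ_lt h'
          have htr := ht.2 i i' hlt hcc k (h'.trans hcc) h2
          apply htr
          constructor
          · exact le_of_lt (ih h2)
          · exact le_trans hle (hr i ⟨k, h2⟩ ⟨k + 1, h'⟩ (by simp [Fin.le_def]))
      intro heq
      have h' := j.isLt
      have hx := aux (j : ℕ) h'
      have e1 : (⟨(j : ℕ), h'⟩ : Fin (c i)) = j := Fin.ext rfl
      have e2 : (⟨(j : ℕ), h'.trans hcc⟩ : Fin (c i')) = j' := Fin.ext hjj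
      rw [e1, e2] at hx
      exact absurd heq (ne_of_lt hx)
    · push_neg at hcc
      intro heq
      rcases Nat.eq_zero_or_eq_succ_pred (j : ℕ) with hj0 | hjs
      · have h0i : 0 < c i := lt_of_le_of_lt (Nat.zero_le _) j.isLt
        have h0i' : 0 < c i' := lt_of_le_of_lt (Nat.zero_le _) j'.isLt
        have hx := hf i i' hlt h0i h0i'
        have e1 : (⟨0, h0i⟩ : Fin (c i)) = j := Fin.ext hj0.symm
        have e2 : (⟨0, h0i'⟩ : Fin (c i')) = j' := Fin.ext (by omega)
        rw [e1, e2] at hx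
        exact absurd heq (ne_of_lt hx)
      · set k := (j : ℕ) - 1 with hk
        have hjk : (j : ℕ) = k + 1 := by omega
        have h1 : k + 1 < c i := hjk ▸ j.isLt
        have h2 : k + 1 < c i' := by
          have := j'.isLt; omega
        have htr := ht.1 i i' hlt hcc k h1 h2
        apply htr
        have e2 : (⟨k + 1, h1⟩ : Fin (c i)) = j := Fin.ext hjk.symm
        have e1 : (⟨k + 1, h2⟩ : Fin (c i')) = j' := Fin.ext (by omega)
        constructor
        · rw [e1, ← heq]
          have hle : (⟨k, Nat.lt_of_succ_lt h1⟩ : Fin (c i)) ≤ j := by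
            rw [Fin.le_def]
            show k ≤ (j : ℕ)
            omega
          exact hr i ⟨k, Nat.lt_of_succ_lt h1⟩ j hle
        · rw [e1, e2]; exact le_of_eq heq
  intro i i' hne j j' hjj
  rcases lt_or_gt_of_ne hne with h | h
  · exact main i i' h j j' hjj
  · exact fun heq => (main i' i h j' j hjj.symm) heq.symm

/-- Ordered pairs of distinct boxes carrying the same entry. -/
noncomputable def RpairsF (T : Filling m n c) :
    Finset (((i : Fin m) × Fin (c i)) × ((i : Fin m) × Fin (c i))) :=
  Finset.univ.filter fun p => p.1 ≠ p.2 ∧ T p.1 = T p.2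

/-- Pairs of boxes carrying the same entry, with strictly increasing column indices. -/
noncomputable def OpairsF (T : Filling m n c) :
    Finset (((i : Fin m) × Fin (c i)) × ((i : Fin m) × Fin (c i))) :=
  Finset.univ.filter fun p => T p.1 = T p.2 ∧ (p.1.2 : ℕ) < (p.2.2 : ℕ)

noncomputable def N2 (d : Fin n →₀ ℕ) : ℕ := ∑ v : Fin n, (d v * d v - d v)

lemma card_RpairsF (T : Filling m n c) : (RpairsF T).card = N2 (wtF T) := by
  classical
  have hun : RpairsF T = Finset.univ.biUnion (fun v : Fin n =>
      (Finset.univ.filter fun b : (i : Fin m) × Fin (c i) => T b = v).offDiag) := by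
    ext p
    simp only [RpairsF, Finset.mem_filter, Finset.mem_univ, true_and, Finset.mem_biUnion,
      Finset.mem_offDiag]
    constructor
    · rintro ⟨hne, heq⟩
      exact ⟨T p.1, rfl, heq.symm, hne⟩
    · rintro ⟨v, h1, h2, hne⟩
      exact ⟨hne, h1.trans h2.symm⟩
  rw [hun, Finset.card_biUnion]
  · unfold N2
    refine Finset.sum_congr rfl fun v _ => ?_
    rw [Finset.offDiag_card, ← wtF_apply]
  · intro v _ v' _ hvv
    refine Finset.disjoint_left.mpr ?_
    rintro p hp hp'
    rw [Finset.mem_offDiag] at hp hp'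
    have h1 := (Finset.mem_filter.mp hp.1).2
    have h2 := (Finset.mem_filter.mp hp'.1).2
    exact hvv (h1 ▸ h2 ▸ rfl)

lemma card_RpairsF_eq_two_mul {T : Filling m n c} (hcd : ColumnsDistinct T) :
    (RpairsF T).card = 2 * (OpairsF T).card := by
  classical
  have hcol : ∀ p : ((i : Fin m) × Fin (c i)) × ((i : Fin m) × Fin (c i)),
      p.1 ≠ p.2 → T p.1 = T p.2 → (p.1.2 : ℕ) ≠ (p.2.2 : ℕ) := by
    rintro ⟨⟨i1, j1⟩, ⟨i2, j2⟩⟩ hne heq hc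
    simp only at hne heq hc
    by_cases hrow : i1 = i2
    · subst hrow
      exact hne (congrArg (Sigma.mk i1) (Fin.ext hc))
    · exact hcd i1 i2 hrow j1 j2 hc heq
  have himg : RpairsF T = OpairsF T ∪ (OpairsF T).image Prod.swap := by
    ext p
    simp only [RpairsF, OpairsF, Finset.mem_filter, Finset.mem_univ, true_and,
      Finset.mem_union, Finset.mem_image]
    constructor
    · rintro ⟨hne, heq⟩
      have hc := hcol p hne heq
      rcases lt_or_gt_of_ne hc with h | h
      · exact Or.inl ⟨heq, h⟩
      · exact Or.inr ⟨(p.2, p.1), ⟨heq.symm, h⟩, rfl⟩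
    · rintro (⟨heq, hlt⟩ | ⟨q, ⟨heq, hlt⟩, rfl⟩)
      · refine ⟨?_, heq⟩
        intro h; rw [h] at hlt; exact lt_irrefl _ hlt
      · refine ⟨?_, heq.symm⟩
        intro h
        rw [Prod.swap] at h
        simp only at h
        rw [h] at hlt
        exact lt_irrefl _ hlt
  rw [himg, Finset.card_union_of_disjoint, Finset.card_image_of_injective _ Prod.swap_injective,
    two_mul]
  rw [Finset.disjoint_left]
  rintro p hp hq
  simp only [OpairsF, Finset.mem_filter, Finset.mem_univ, true_and, Finset.mem_image] at hp hq
  obtain ⟨q, ⟨-, hq2⟩, rfl⟩ := hq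
  have := hp.2
  simp only [Prod.swap] at this
  omega

/-- The key injection: same-entry pairs inject into same-row pairs. -/
lemma card_OpairsF_le {T : Filling m n c} (h : m ≤ n) (hcd : ColumnsDistinct T) :
    (OpairsF T).card ≤ (OpairsF (rowFill c h)).card := by
  classical
  set f : (((i : Fin m) × Fin (c i)) × ((i : Fin m) × Fin (c i))) →
      (((i : Fin m) × Fin (c i)) × ((i : Fin m) × Fin (c i))) :=
    fun p => if hh : (p.1.2 : ℕ) < c p.2.1 then (⟨p.2.1, ⟨(p.1.2 : ℕ), hh⟩⟩, p.2) else p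
    with hf
  apply Finset.card_le_card_of_injOn f
  · intro p hp
    simp only [OpairsF, Finset.mem_coe, Finset.mem_filter, Finset.mem_univ, true_and] at hp
    have hh : (p.1.2 : ℕ) < c p.2.1 := lt_trans hp.2 p.2.2.isLt
    simp only [hf, dif_pos hh, OpairsF, Finset.mem_coe, Finset.mem_filter, Finset.mem_univ, true_and]
    exact ⟨rfl, hp.2⟩
  · intro p hp q hq hfpq
    simp only [OpairsF, Finset.mem_coe, Finset.mem_filter, Finset.mem_univ, true_and] at hp hq
    have hhp : (p.1.2 : ℕ) < c p.2.1 := lt_trans hp.2 p.2.2.isLt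
    have hhq : (q.1.2 : ℕ) < c q.2.1 := lt_trans hq.2 q.2.2.isLt
    simp only [hf, dif_pos hhp, dif_pos hhq] at hfpq
    obtain ⟨h1, h2⟩ := Prod.mk.inj hfpq
    have hcols : (p.1.2 : ℕ) = (q.1.2 : ℕ) := by
      have := congrArg (fun s : (i : Fin m) × Fin (c i) => (s.2 : ℕ)) h1
      simpa using this
    have hent : T p.1 = T q.1 := by
      rw [hp.1, hq.1, h2]
    have hrows : p.1.1 = q.1.1 := by
      by_contra hrr
      exact hcd p.1.1 q.1.1 hrr p.1.2 q.1.2 hcols hent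
    have hbox : p.1 = q.1 := box_ext hrows hcols
    exact Prod.ext hbox h2

/-- If the injection is onto, every same-row pair of boxes is "witnessed": the entry of
the right box appears also in the column of the left box. -/
lemma opairsF_surj {T : Filling m n c} (h : m ≤ n) (hcd : ColumnsDistinct T)
    (hcard : (OpairsF (rowFill c h)).card ≤ (OpairsF T).card) :
    ∀ (i : Fin m) (j j' : Fin (c i)), (j' : ℕ) < (j : ℕ) →
      ∃ b : (i : Fin m) × Fin (c i), (b.2 : ℕ) = (j' : ℕ) ∧ T b = T ⟨i, j⟩ := by
  classical
  set f : (((i : Fin m) × Fin (c i)) × ((i : Fin m) × Fin (c i))) →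
      (((i : Fin m) × Fin (c i)) × ((i : Fin m) × Fin (c i))) :=
    fun p => if hh : (p.1.2 : ℕ) < c p.2.1 then (⟨p.2.1, ⟨(p.1.2 : ℕ), hh⟩⟩, p.2) else p
    with hf
  have hmaps : ∀ p ∈ OpairsF T, f p ∈ OpairsF (rowFill c h) := by
    intro p hp
    simp only [OpairsF, Finset.mem_filter, Finset.mem_univ, true_and] at hp
    have hh : (p.1.2 : ℕ) < c p.2.1 := lt_trans hp.2 p.2.2.isLt
    simp only [hf, dif_pos hh, OpairsF, Finset.mem_filter, Finset.mem_univ, true_and]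
    exact ⟨rfl, hp.2⟩
  have hinj : Set.InjOn f (OpairsF T) := by
    intro p hp q hq hfpq
    simp only [OpairsF, Finset.mem_coe, Finset.mem_filter, Finset.mem_univ, true_and] at hp hq
    have hhp : (p.1.2 : ℕ) < c p.2.1 := lt_trans hp.2 p.2.2.isLt
    have hhq : (q.1.2 : ℕ) < c q.2.1 := lt_trans hq.2 q.2.2.isLt
    simp only [hf, dif_pos hhp, dif_pos hhq] at hfpq
    obtain ⟨h1, h2⟩ := Prod.mk.inj hfpq
    have hcols : (p.1.2 : ℕ) = (q.1.2 : ℕ) := by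
      have := congrArg (fun s : (i : Fin m) × Fin (c i) => (s.2 : ℕ)) h1
      simpa using this
    have hent : T p.1 = T q.1 := by
      rw [hp.1, hq.1, h2]
    have hrows : p.1.1 = q.1.1 := by
      by_contra hrr
      exact hcd p.1.1 q.1.1 hrr p.1.2 q.1.2 hcols hent
    have hbox : p.1 = q.1 := box_ext hrows hcols
    exact Prod.ext hbox h2
  have himg : (OpairsF T).image f = OpairsF (rowFill c h) := by
    apply Finset.eq_of_subset_of_card_le
    · intro x hx
      obtain ⟨p, hp, rfl⟩ := Finset.mem_image.mp hx
      exact hmaps p hp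
    · rw [Finset.card_image_of_injOn hinj]
      exact hcard
  intro i j j' hjj
  have htar : ((⟨i, j'⟩, ⟨i, j⟩) :
      ((i : Fin m) × Fin (c i)) × ((i : Fin m) × Fin (c i))) ∈ OpairsF (rowFill c h) := by
    simp only [OpairsF, Finset.mem_filter, Finset.mem_univ, true_and]
    exact ⟨rfl, hjj⟩
  rw [← himg] at htar
  obtain ⟨p, hp, hfp⟩ := Finset.mem_image.mp htar
  simp only [OpairsF, Finset.mem_filter, Finset.mem_univ, true_and] at hp
  have hh : (p.1.2 : ℕ) < c p.2.1 := lt_trans hp.2 p.2.2.isLt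
  simp only [hf, dif_pos hh] at hfp
  obtain ⟨h1, h2⟩ := Prod.mk.inj hfp
  have hcols : (p.1.2 : ℕ) = (j' : ℕ) := by
    have := congrArg (fun s : (i : Fin m) × Fin (c i) => (s.2 : ℕ)) h1
    simpa using this
  refine ⟨p.1, hcols, ?_⟩
  rw [hp.1, h2]

/-- The rigidity lemma: a packed Young composition tableau in which every same-row
pair is witnessed must be the canonical row filling. -/
lemma p3 {T : Filling m n c} (hc : ∀ i, 0 < c i) (hr : RowsWeakIncr T)
    (hf : FirstColStrictIncr T) (ht : TriplesYoung T)
    (hpack : ∀ b : (i : Fin m) × Fin (c i), (T b : ℕ) < m)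
    (hF : ∀ (i : Fin m) (j j' : Fin (c i)), (j' : ℕ) < (j : ℕ) →
      ∃ b : (i : Fin m) × Fin (c i), (b.2 : ℕ) = (j' : ℕ) ∧ T b = T ⟨i, j⟩) :
    ∀ b : (i : Fin m) × Fin (c i), (T b : ℕ) = (b.1 : ℕ) := by
  classical
  have hcd := cd_of_yct hr hf ht
  have hge := yct_entry_ge hr hf hc
  suffices S : ∀ J, ∀ (i : Fin m) (hJ : J < c i), (T ⟨i, ⟨J, hJ⟩⟩ : ℕ) = (i : ℕ) by
    rintro ⟨i, j⟩
    have := S (j : ℕ) i j.isLt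
    rwa [show (⟨(j : ℕ), j.isLt⟩ : Fin (c i)) = j from Fin.ext rfl] at this
  intro J
  induction J with
  | zero =>
    intro i h0
    have := firstcol_packed hf hc hpack i
    rwa [show (⟨0, hc i⟩ : Fin (c i)) = ⟨0, h0⟩ from Fin.ext rfl] at this
  | succ J ih =>
    intro i hJ1
    set Rset : Finset (Fin m) := Finset.univ.filter (fun r => J + 1 < c r) with hRdef
    set g : Fin m → Fin m :=
      fun r => if hcr : J + 1 < c r then ⟨(T ⟨r, ⟨J + 1, hcr⟩⟩ : ℕ), hpack _⟩ else r with hgdef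
    have hmem : ∀ r : Fin m, r ∈ Rset ↔ J + 1 < c r := by
      intro r; simp [hRdef]
    have hgval : ∀ r (hcr : J + 1 < c r), (g r : ℕ) = (T ⟨r, ⟨J + 1, hcr⟩⟩ : ℕ) := by
      intro r hcr; simp [hgdef, dif_pos hcr]
    have hgrow : ∀ r (hcr : J + 1 < c r), J < c (g r) := by
      intro r hcr
      obtain ⟨b, hbcol0, hbval⟩ := hF r ⟨J + 1, hcr⟩ ⟨J, Nat.lt_of_succ_lt hcr⟩ (by simp)
      have hbcol : (b.2 : ℕ) = J := hbcol0
      have hJb : J < c b.1 := hbcol ▸ b.2.isLt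
      have hIHb : (T b : ℕ) = (b.1 : ℕ) := by
        have h2 := ih b.1 hJb
        have e : (⟨J, hJb⟩ : Fin (c b.1)) = b.2 := Fin.ext hbcol.symm
        rw [e] at h2
        exact h2
      have : (g r : ℕ) = (b.1 : ℕ) := by
        rw [hgval r hcr, ← hbval, hIHb]
      have hrw : g r = b.1 := Fin.ext this
      rw [hrw]
      exact hJb
    have hmaps : ∀ r ∈ Rset, g r ∈ Rset := by
      intro r hrm
      have hcr : J + 1 < c r := (hmem r).mp hrm
      rw [hmem]
      by_contra hnot
      push_neg at hnot
      have hJg : J < c (g r) := hgrow r hcr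
      have hcgr : c (g r) = J + 1 := by omega
      -- r < g r
      have hge1 : (r : ℕ) ≤ (g r : ℕ) := by
        rw [hgval r hcr]
        exact hge ⟨r, ⟨J + 1, hcr⟩⟩
      have hne : r ≠ g r := by
        intro hcon
        rw [← hcon] at hcgr
        omega
      have hlt : r < g r := by
        rw [Fin.lt_def]
        rcases Nat.lt_or_ge (r : ℕ) ((g r : ℕ)) with h | h
        · exact h
        · exact absurd (Fin.ext (le_antisymm h hge1).symm) hne
      have hccgr : c (g r) < c r := by omega
      have htr := ht.2 r (g r) hlt hccgr J hcr hJg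
      apply htr
      constructor
      · rw [Fin.le_def]
        have e1 : (T ⟨g r, ⟨J, hJg⟩⟩ : ℕ) = ((g r) : ℕ) := ih (g r) hJg
        rw [e1, hgval r hcr]
      · rw [Fin.le_def]
        have e2 : (T ⟨r, ⟨J, Nat.lt_of_succ_lt hcr⟩⟩ : ℕ) = (r : ℕ) :=
          ih r (Nat.lt_of_succ_lt hcr)
        rw [e2]
        have e1 : (T ⟨g r, ⟨J, hJg⟩⟩ : ℕ) = ((g r) : ℕ) := ih (g r) hJg
        rw [e1]
        exact hge1
    have hinj : Set.InjOn g Rset := by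
      intro r hrm r' hrm' hgr
      have hcr : J + 1 < c r := (hmem r).mp (by simpa using hrm)
      have hcr' : J + 1 < c r' := (hmem r').mp (by simpa using hrm')
      by_contra hne
      apply hcd r r' hne ⟨J + 1, hcr⟩ ⟨J + 1, hcr'⟩ rfl
      apply Fin.ext
      rw [← hgval r hcr, ← hgval r' hcr', hgr]
    have himg : Rset.image g = Rset := by
      apply Finset.eq_of_subset_of_card_le
      · intro x hx
        obtain ⟨r, hr, rfl⟩ := Finset.mem_image.mp hx
        exact hmaps r hr
      · rw [Finset.card_image_of_injOn (by
          intro x hx y hy hxy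
          exact hinj (by simpa using hx) (by simpa using hy) hxy)]
    have hsum : ∑ r ∈ Rset, ((r : ℕ)) = ∑ r ∈ Rset, ((g r : ℕ)) := by
      have h1 : ∑ x ∈ Rset.image g, ((x : ℕ)) = ∑ r ∈ Rset, ((g r : ℕ)) :=
        Finset.sum_image (by
          intro x hx y hy hxy
          exact hinj (by simpa using hx) (by simpa using hy) hxy)
      rw [← h1, himg]
    have hple : ∀ r ∈ Rset, (r : ℕ) ≤ (g r : ℕ) := by
      intro r hrm
      have hcr : J + 1 < c r := (hmem r).mp hrm
      rw [hgval r hcr]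
      exact hge ⟨r, ⟨J + 1, hcr⟩⟩
    have heqpt := (Finset.sum_eq_sum_iff_of_le hple).mp hsum
    have hi : i ∈ Rset := (hmem i).mpr hJ1
    have := heqpt i hi
    rw [hgval i hJ1] at this
    omega

end ProofAux

theorem yqs_eq_qs_implies_eq
    (n : ℕ) (hn : 0 < n) (α β : List ℕ)
    (hα : ∀ x ∈ α, 0 < x) (hβ : ∀ x ∈ β, 0 < x)
    (hlα : α.length ≤ n) (hlβ : β.length ≤ n)
    (heq : YQSpoly n α = QSpoly n β) :
    α = β := by
  classical
  have hcα : ∀ i : Fin α.length, 0 < cshape α i := fun i => hα _ (α.get_mem i)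
  have hcβ : ∀ i : Fin β.length, 0 < cshape β i := fun i => hβ _ (β.get_mem i)
  set Uα : Filling α.length n (cshape α) := rowFill (cshape α) hlα with hUαdef
  set Uβ : Filling β.length n (cshape β) := rowFill (cshape β) hlβ with hUβdef
  set dα : Fin n →₀ ℕ := wtF Uα with hdαdef
  set dβ : Fin n →₀ ℕ := wtF Uβ with hdβdef
  -- coefficient equality gives count equality
  have hcnt : ∀ d : Fin n →₀ ℕ,
      cnt (fun T : Filling α.length n (cshape α) =>
        RowsWeakIncr T ∧ FirstColStrictIncr T ∧ TriplesYoung T) d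
      = cnt (fun T : Filling β.length n (cshape β) =>
        RowsWeakDecr T ∧ FirstColStrictIncr T ∧ TriplesAB T) d := by
    intro d
    have h3 := congrArg (MvPolynomial.coeff d) heq
    rw [YQSpoly, QSpoly, coeff_genfun, coeff_genfun] at h3
    exact_mod_cast h3
  -- transfer of existence
  have getY : ∃ U : Filling α.length n (cshape α),
      (RowsWeakIncr U ∧ FirstColStrictIncr U ∧ TriplesYoung U) ∧ wtF U = dβ := by
    apply exists_of_cnt_pos
    rw [hcnt dβ]
    exact cnt_pos_of_mem Uβ
      ⟨⟨rowFill_rowsWeakDecr hlβ, rowFill_firstCol hlβ, rowFill_triplesAB hlβ⟩, rfl⟩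
  have getR : ∃ T : Filling β.length n (cshape β),
      (RowsWeakDecr T ∧ FirstColStrictIncr T ∧ TriplesAB T) ∧ wtF T = dα := by
    apply exists_of_cnt_pos
    rw [← hcnt dα]
    exact cnt_pos_of_mem Uα
      ⟨⟨rowFill_rowsWeakIncr hlα, rowFill_firstCol hlα, rowFill_triplesYoung hlα⟩, rfl⟩
  obtain ⟨U, hUpred, hUwt⟩ := getY
  obtain ⟨T, hTpred, hTwt⟩ := getR
  -- lengths are equal
  have hwt_box : ∀ {M : ℕ} {cc : Fin M → ℕ} (W : Filling M n cc)
      (b : (i : Fin M) × Fin (cc i)), wtF W (W b) ≠ 0 := by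
    intro M cc W b
    rw [wtF_apply]
    exact Finset.card_ne_zero_of_mem (Finset.mem_filter.mpr ⟨Finset.mem_univ _, rfl⟩)
  have hLM : α.length = β.length := by
    apply le_antisymm
    · rcases Nat.eq_zero_or_pos α.length with h0 | hp
      · omega
      · set i0 : Fin α.length := ⟨α.length - 1, by omega⟩ with hi0
        set b0 : (i : Fin α.length) × Fin (cshape α i) := ⟨i0, ⟨0, hcα i0⟩⟩ with hb0
        have h1 : (i0 : ℕ) ≤ (U b0 : ℕ) := firstcol_ge hUpred.2.1 hcα i0
        have h2 := hwt_box U b0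
        rw [hUwt, hdβdef, hUβdef, wtF_rowFill] at h2
        by_cases hv : ((U b0 : ℕ)) < β.length
        · have : (i0 : ℕ) = α.length - 1 := rfl
          omega
        · rw [dif_neg hv] at h2
          exact absurd rfl h2
    · rcases Nat.eq_zero_or_pos β.length with h0 | hp
      · omega
      · set i0 : Fin β.length := ⟨β.length - 1, by omega⟩ with hi0
        set b0 : (i : Fin β.length) × Fin (cshape β i) := ⟨i0, ⟨0, hcβ i0⟩⟩ with hb0
        have h1 : (i0 : ℕ) ≤ (T b0 : ℕ) := firstcol_ge hTpred.2.1 hcβ i0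
        have h2 := hwt_box T b0
        rw [hTwt, hdαdef, hUαdef, wtF_rowFill] at h2
        by_cases hv : ((T b0 : ℕ)) < α.length
        · have : (i0 : ℕ) = β.length - 1 := rfl
          omega
        · rw [dif_neg hv] at h2
          exact absurd rfl h2
  rcases Nat.eq_zero_or_pos α.length with hL0 | hLpos
  · have hM0 : β.length = 0 := by omega
    rw [List.length_eq_zero_iff] at hL0 hM0
    rw [hL0, hM0]
  -- packedness
  have hUpack : ∀ b : (i : Fin α.length) × Fin (cshape α i), (U b : ℕ) < α.length := by
    intro b
    have h2 := hwt_box U b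
    rw [hUwt, hdβdef, hUβdef, wtF_rowFill] at h2
    by_cases hv : ((U b : ℕ)) < β.length
    · omega
    · rw [dif_neg hv] at h2
      exact absurd rfl h2
  have hTpack : ∀ b : (i : Fin β.length) × Fin (cshape β i), (T b : ℕ) < β.length := by
    intro b
    have h2 := hwt_box T b
    rw [hTwt, hdαdef, hUαdef, wtF_rowFill] at h2
    by_cases hv : ((T b : ℕ)) < α.length
    · omega
    · rw [dif_neg hv] at h2
      exact absurd rfl h2
  -- column distinctness
  have hcdU : ColumnsDistinct U := cd_of_yct hUpred.1 hUpred.2.1 hUpred.2.2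
  have hcdT : ColumnsDistinct T := cd_of_rct hTpred.1 hTpred.2.1 hTpred.2.2
  have hcdUα : ColumnsDistinct Uα := rowFill_cd hlα
  have hcdUβ : ColumnsDistinct Uβ := rowFill_cd hlβ
  -- counting chain
  have e1 : (RpairsF U).card = N2 dβ := by rw [card_RpairsF, hUwt]
  have e2 : (RpairsF Uβ).card = N2 dβ := by rw [card_RpairsF]
  have e3 : (RpairsF T).card = N2 dα := by rw [card_RpairsF, hTwt]
  have e4 : (RpairsF Uα).card = N2 dα := by rw [card_RpairsF]
  have d1 := card_RpairsF_eq_two_mul hcdU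
  have d2 := card_RpairsF_eq_two_mul hcdUβ
  have d3 := card_RpairsF_eq_two_mul hcdT
  have d4 := card_RpairsF_eq_two_mul hcdUα
  have i1 : (OpairsF U).card ≤ (OpairsF Uα).card := card_OpairsF_le hlα hcdU
  have i2 : (OpairsF T).card ≤ (OpairsF Uβ).card := card_OpairsF_le hlβ hcdT
  have hkey : (OpairsF Uα).card ≤ (OpairsF U).card := by omega
  -- surjectivity and rigidity
  have hF := opairsF_surj hlα hcdU hkey
  have hfin := p3 hcα hUpred.1 hUpred.2.1 hUpred.2.2 hUpack hF
  have hUeq : U = Uα := by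
    funext b
    apply Fin.ext
    rw [hfin b]
    simp [hUαdef, rowFill]
  have hdd : dβ = dα := by rw [← hUwt, hUeq]
  -- conclude list equality
  apply List.ext_get hLM
  intro i h1 h2
  have hin : i < n := lt_of_lt_of_le h1 hlα
  have hv := DFunLike.congr_fun hdd (⟨i, hin⟩ : Fin n)
  rw [hdαdef, hdβdef, hUαdef, hUβdef, wtF_rowFill, wtF_rowFill] at hv
  rw [dif_pos h1, dif_pos h2] at hv
  exact hv.symm

end PaperYR
end

section
/- Let a be a weak composition of length n. Let b(a) be the weakly increasing word consisting of a_1 copies of 1, then a_2 copies of 2, …, then a_n copies of n; let p_1 < p_2 < ⋯ < p_k be the distinct nonzero partial sums a_1 + ⋯ + a_i; and let r_1 < r_2 < ⋯ < r_k be the indices of the nonzero entries of a. Call a b(a)-compatible word w a-flag compatible if w_{p_i} = r_i for all 1 ≤ i ≤ k. Then the fundamental particle satisfies fp_a = Σ_{w a-flag compatible} x^{comp(w)}. -/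
open scoped Classical
open MvPolynomial

namespace PaperYR

/-- The list of indices of the nonzero entries of `a`, in increasing order. -/
def nzIndices (n : ℕ) (a : Fin n → ℕ) : List (Fin n) :=
  (List.finRange n).filter (fun i => decide (a i ≠ 0))

/-- The flag condition: the letter of `w` in position `p_i` (the `i`-th distinct nonzero
partial sum of `a`) equals the row index of the `i`-th nonzero entry of `a`. -/
noncomputable def FlagCond (n : ℕ) (a : Fin n → ℕ) (w : List ℕ) : Prop :=
  ∀ (m : ℕ) (h : m < (nzIndices n a).length),
    w.getD
      ((∑ j ∈ Finset.univ.filter (fun j : Fin n => j ≤ (nzIndices n a).get ⟨m, h⟩), a j) - 1) 0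
      = ((nzIndices n a).get ⟨m, h⟩ : ℕ) + 1


def off {n : ℕ} (a : Fin n → ℕ) (i : Fin n) : ℕ :=
  ∑ i' ∈ Finset.univ.filter (fun i' => i' < i), a i'

lemma off_zero {n : ℕ} (a : Fin (n+1) → ℕ) : off a 0 = 0 := by
  unfold off
  rw [Finset.sum_filter]
  simp

lemma off_succ {n : ℕ} (a : Fin (n+1) → ℕ) (i : Fin n) :
    off a i.succ = a 0 + off (a ∘ Fin.succ) i := by
  unfold off
  rw [Finset.sum_filter, Finset.sum_filter, Fin.sum_univ_succ]
  simp [Fin.succ_lt_succ_iff, Fin.succ_pos]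

lemma off_add_le {n : ℕ} (a : Fin n → ℕ) {i i' : Fin n} (h : i < i') :
    off a i + a i ≤ off a i' := by
  have hsub : insert i (Finset.univ.filter (fun i' => i' < i)) ⊆
      Finset.univ.filter (fun j => j < i') := by
    intro j hj
    simp only [Finset.mem_insert, Finset.mem_filter, Finset.mem_univ, true_and] at *
    rcases hj with rfl | hj
    · exact h
    · exact hj.trans h
  have hni : i ∉ Finset.univ.filter (fun i' => i' < i) := by simp
  calc off a i + a i = ∑ j ∈ insert i (Finset.univ.filter (fun i' => i' < i)), a j := by
        rw [Finset.sum_insert hni]; unfold off; omega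
    _ ≤ _ := Finset.sum_le_sum_of_subset hsub

lemma off_add_le_total {n : ℕ} (a : Fin n → ℕ) (i : Fin n) :
    off a i + a i ≤ ∑ j, a j := by
  have hsub : insert i (Finset.univ.filter (fun i' => i' < i)) ⊆ Finset.univ := by
    intro j _; simp
  have hni : i ∉ Finset.univ.filter (fun i' => i' < i) := by simp
  calc off a i + a i = ∑ j ∈ insert i (Finset.univ.filter (fun i' => i' < i)), a j := by
        rw [Finset.sum_insert hni]; unfold off; omega
    _ ≤ _ := Finset.sum_le_sum_of_subset hsub

lemma decomp_uniq {n : ℕ} (a : Fin n → ℕ) {i i' : Fin n} {j j' : ℕ}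
    (hj : j < a i) (hj' : j' < a i') (h : off a i + j = off a i' + j') : i = i' ∧ j = j' := by
  rcases lt_trichotomy i i' with hlt | heq | hgt
  · have := off_add_le a hlt; omega
  · subst heq; omega
  · have := off_add_le a hgt; omega

lemma length_fl {n : ℕ} (L : Fin n → List ℕ) :
    ((List.finRange n).flatMap L).length = ∑ i, (L i).length := by
  rw [List.length_flatMap, Fin.sum_univ_def]

lemma getD_fl {n : ℕ} (L : Fin n → List ℕ) (i : Fin n) (j : ℕ)
    (hj : j < (L i).length) (d : ℕ) :
    ((List.finRange n).flatMap L).getD (off (fun i => (L i).length) i + j) d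
      = (L i).getD j d := by
  induction n with
  | zero => exact i.elim0
  | succ m ih =>
    rw [List.finRange_succ, List.flatMap_cons, List.flatMap_map]
    induction i using Fin.cases with
    | zero =>
      rw [off_zero]
      simpa using List.getD_append _ _ d j hj
    | succ i₀ =>
      rw [off_succ]
      rw [show (fun i => (L i).length) 0 + off ((fun i => (L i).length) ∘ Fin.succ) i₀ + j
        = (L 0).length + (off (fun i => (L (Fin.succ i)).length) i₀ + j) by
          simp only [Function.comp_def]; ring]
      rw [List.getD_append_right _ _ _ _ (by omega)]
      rw [Nat.add_sub_cancel_left]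
      exact ih (fun i => L i.succ) i₀ hj

lemma exists_decomp {n : ℕ} (L : Fin n → List ℕ) (k : ℕ)
    (hk : k < ((List.finRange n).flatMap L).length) :
    ∃ (i : Fin n) (j : ℕ), j < (L i).length ∧ k = off (fun i => (L i).length) i + j := by
  induction n generalizing k with
  | zero => simp at hk
  | succ m ih =>
    rw [List.finRange_succ, List.flatMap_cons, List.flatMap_map, List.length_append] at hk
    by_cases h0 : k < (L 0).length
    · exact ⟨0, k, h0, by rw [off_zero]; ring⟩
    · obtain ⟨i₀, j, hj, hkj⟩ := ih (fun i => L i.succ) (k - (L 0).length) (by omega)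
      refine ⟨i₀.succ, j, hj, ?_⟩
      rw [off_succ]
      simp only [Function.comp_def]
      omega

lemma fin_rev_mk {m j : ℕ} (h : j < m) :
    Fin.rev ⟨j, h⟩ = (⟨m - 1 - j, by omega⟩ : Fin m) := by
  apply Fin.ext
  simp [Fin.val_rev]
  omega

def blockW {n : ℕ} (a : Fin n → ℕ) (T : Filling n n a) (i : Fin n) : List ℕ :=
  List.ofFn (fun j : Fin (a i) => (T ⟨i, j.rev⟩ : ℕ) + 1)

def phi {n : ℕ} (a : Fin n → ℕ) (T : Filling n n a) : List ℕ :=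
  (List.finRange n).flatMap (blockW a T)

lemma blockW_length {n : ℕ} (a : Fin n → ℕ) (T : Filling n n a) (i : Fin n) :
    (blockW a T i).length = a i := List.length_ofFn

lemma blockW_len_fun {n : ℕ} (a : Fin n → ℕ) (T : Filling n n a) :
    (fun i => (blockW a T i).length) = a := by
  funext i; exact blockW_length a T i

lemma phi_length {n : ℕ} (a : Fin n → ℕ) (T : Filling n n a) :
    (phi a T).length = ∑ i, a i := by
  rw [phi, length_fl, blockW_len_fun]

lemma bword_eq {n : ℕ} (a : Fin n → ℕ) :
    bword n a = (List.finRange n).flatMap (fun i => List.replicate (a i) ((i : ℕ) + 1)) := rfl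

lemma bword_length {n : ℕ} (a : Fin n → ℕ) : (bword n a).length = ∑ i, a i := by
  have hfun : (fun i' : Fin n => (List.replicate (a i') ((i' : ℕ) + 1)).length) = a := by
    funext i'; exact List.length_replicate
  rw [bword_eq, length_fl, hfun]

lemma phi_getD {n : ℕ} (a : Fin n → ℕ) (T : Filling n n a) (i : Fin n) {j : ℕ}
    (hj : j < a i) (d : ℕ) :
    (phi a T).getD (off a i + j) d = (T ⟨i, ⟨a i - 1 - j, by omega⟩⟩ : ℕ) + 1 := by
  have h1 : off a = off (fun i => (blockW a T i).length) := by rw [blockW_len_fun]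
  rw [phi, h1, getD_fl _ _ _ (by rw [blockW_length]; exact hj)]
  rw [blockW, List.getD_eq_getElem _ _ (by rw [List.length_ofFn]; exact hj),
    List.getElem_ofFn]
  rw [fin_rev_mk (by simpa using hj : (j : ℕ) < a i)]

lemma bword_getD {n : ℕ} (a : Fin n → ℕ) (i : Fin n) {j : ℕ} (hj : j < a i) (d : ℕ) :
    (bword n a).getD (off a i + j) d = (i : ℕ) + 1 := by
  have hfun : (fun i' : Fin n => (List.replicate (a i') ((i' : ℕ) + 1)).length) = a := by
    funext i'; exact List.length_replicate
  have h1 : off a = off (fun i' : Fin n => (List.replicate (a i') ((i' : ℕ) + 1)).length) := by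
    rw [hfun]
  rw [bword_eq, h1, getD_fl _ _ _ (by rw [List.length_replicate]; exact hj)]
  rw [List.getD_eq_getElem _ _ (by rw [List.length_replicate]; exact hj),
    List.getElem_replicate]

lemma exists_decomp' {n : ℕ} (a : Fin n → ℕ) (k : ℕ) (hk : k < ∑ i, a i) :
    ∃ (i : Fin n) (j : ℕ), j < a i ∧ k = off a i + j := by
  have h1 : (fun i => (List.replicate (a i) 0).length) = a := by
    funext i; rw [List.length_replicate]
  obtain ⟨i, j, hj, hkj⟩ := exists_decomp (fun i : Fin n => List.replicate (a i) 0) k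
    (by rw [length_fl]; simpa [h1] using hk)
  rw [h1] at hkj
  rw [List.length_replicate] at hj
  exact ⟨i, j, hj, hkj⟩

lemma sum_le_eq {n : ℕ} (a : Fin n → ℕ) (i : Fin n) :
    ∑ j ∈ Finset.univ.filter (fun j => j ≤ i), a j = off a i + a i := by
  have h : Finset.univ.filter (fun j => j ≤ i) =
      insert i (Finset.univ.filter (fun j => j < i)) := by
    ext j
    simp only [Finset.mem_filter, Finset.mem_univ, true_and, Finset.mem_insert]
    constructor
    · intro hj; rcases eq_or_lt_of_le hj with h' | h'
      · exact Or.inl h'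
      · exact Or.inr h'
    · rintro (rfl | hj); · exact le_refl _
      · exact le_of_lt hj
  rw [h, Finset.sum_insert (by simp)]
  unfold off; omega

lemma nz_mem {n : ℕ} (a : Fin n → ℕ) (i : Fin n) (hi : a i ≠ 0) :
    ∃ (m : ℕ) (h : m < (nzIndices n a).length), (nzIndices n a).get ⟨m, h⟩ = i := by
  have : i ∈ nzIndices n a := by
    unfold nzIndices
    rw [List.mem_filter]
    exact ⟨List.mem_finRange i, by simpa using hi⟩
  obtain ⟨⟨m, h⟩, heq⟩ := List.mem_iff_get.mp this
  exact ⟨m, h, heq⟩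

lemma nz_ne {n : ℕ} (a : Fin n → ℕ) (m : ℕ) (h : m < (nzIndices n a).length) :
    a ((nzIndices n a).get ⟨m, h⟩) ≠ 0 := by
  have := List.get_mem (nzIndices n a) ⟨m, h⟩
  have h2 : (nzIndices n a).get ⟨m, h⟩ ∈
      List.filter (fun i => decide (a i ≠ 0)) (List.finRange n) := this
  rw [List.mem_filter] at h2
  simpa using h2.2

lemma flagCond_iff {n : ℕ} (a : Fin n → ℕ) (w : List ℕ) :
    FlagCond n a w ↔
      ∀ i : Fin n, a i ≠ 0 → w.getD (off a i + (a i - 1)) 0 = (i : ℕ) + 1 := by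
  constructor
  · intro hf i hi
    obtain ⟨m, h, heq⟩ := nz_mem a i hi
    have := hf m h
    rw [heq, sum_le_eq] at this
    have hpos : off a i + a i - 1 = off a i + (a i - 1) := by omega
    rwa [hpos] at this
  · intro h m hm
    have hne := nz_ne a m hm
    rw [sum_le_eq]
    have hpos : off a ((nzIndices n a).get ⟨m, hm⟩) + a ((nzIndices n a).get ⟨m, hm⟩) - 1
        = off a ((nzIndices n a).get ⟨m, hm⟩) + (a ((nzIndices n a).get ⟨m, hm⟩) - 1) := by
      omega
    rw [hpos]
    exact h _ hne
lemma sep_imp_cd {m n : ℕ} {c : Fin m → ℕ} {T : Filling m n c} (hs : RowsSeparated T) :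
    ColumnsDistinct T := by
  intro i i' hne j j' _
  rcases lt_or_gt_of_ne hne with h | h
  · exact ne_of_lt (hs i i' h j j')
  · exact (ne_of_lt (hs i' i h j' j)).symm

lemma sep_imp_tri {m n : ℕ} {c : Fin m → ℕ} {T : Filling m n c} (hs : RowsSeparated T) :
    TriplesAB T := by
  constructor
  · intro i i' hlt _ k h1 h2 hcon
    exact absurd hcon.1 (not_le.mpr (hs i i' hlt _ _))
  · intro i i' hlt _ k h1 h2 hcon
    exact absurd hcon.2 (not_le.mpr (hs i i' hlt _ _))

lemma getD_mono_of_step (w : List ℕ)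
    (h : ∀ k, k + 1 < w.length → w.getD k 0 ≤ w.getD (k + 1) 0) :
    ∀ p q, p ≤ q → q < w.length → w.getD p 0 ≤ w.getD q 0 := by
  intro p q hpq hq
  induction q, hpq using Nat.le_induction with
  | base => exact le_refl _
  | succ q hpq ih => exact le_trans (ih (by omega)) (h q hq)

lemma compat_length {n : ℕ} {a : Fin n → ℕ} {w : List ℕ}
    (hw : Compatible n (bword n a) w) : w.length = ∑ i, a i := by
  rw [hw.1, bword_length]

lemma compat_cross {n : ℕ} {a : Fin n → ℕ} {w : List ℕ}
    (hw : Compatible n (bword n a) w) {i i' : Fin n} (h : i < i') {j j' : ℕ}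
    (hj : j < a i) (hj' : j' < a i') :
    w.getD (off a i + j) 0 < w.getD (off a i' + j') 0 := by
  obtain ⟨hlen, _, hstep, hstrict, _⟩ := hw
  have hlen' : w.length = ∑ i, a i := by rw [hlen, bword_length]
  have hq : off a i' + j' < w.length := by
    have := off_add_le_total a i'; omega
  have hs_le : off a i + j ≤ off a i + (a i - 1) := by omega
  have ht : off a i + a i ≤ off a i' + j' := le_trans (off_add_le a h) (Nat.le_add_right _ _)
  have hslen : off a i + (a i - 1) + 1 = off a i + a i := by omega
  have hw1 : w.getD (off a i + j) 0 ≤ w.getD (off a i + (a i - 1)) 0 :=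
    getD_mono_of_step w hstep _ _ hs_le (by omega)
  obtain ⟨i2, j2, hj2, he⟩ := exists_decomp' a (off a i + (a i - 1) + 1) (by omega)
  have hi2 : i < i2 := by
    rcases lt_trichotomy i2 i with hlt | heq | hgt
    · have := off_add_le a hlt; omega
    · subst heq; omega
    · exact hgt
  have hbs : (bword n a).getD (off a i + (a i - 1)) 0 = (i : ℕ) + 1 :=
    bword_getD a i (j := a i - 1) (by omega) 0
  have hbt : (bword n a).getD (off a i + (a i - 1) + 1) 0 = (i2 : ℕ) + 1 := by
    rw [he]; exact bword_getD a i2 hj2 0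
  have hstrict' : w.getD (off a i + (a i - 1)) 0 < w.getD (off a i + (a i - 1) + 1) 0 := by
    apply hstrict _ (by rw [bword_length]; omega)
    rw [hbs, hbt]
    have : (i : ℕ) < (i2 : ℕ) := hi2
    omega
  have hw2 : w.getD (off a i + (a i - 1) + 1) 0 ≤ w.getD (off a i' + j') 0 :=
    getD_mono_of_step w hstep _ _ (by omega) hq
  omega

def psi {n : ℕ} (a : Fin n → ℕ) (w : List ℕ) : Filling n n a := fun b =>
  ⟨min (w.getD (off a b.1 + (a b.1 - 1 - (b.2 : ℕ))) 0 - 1) (n - 1),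
   Nat.lt_of_le_of_lt (Nat.min_le_right _ _) (by have := b.1.isLt; omega)⟩

lemma compat_getD_bounds {n : ℕ} {a : Fin n → ℕ} {w : List ℕ}
    (hw : Compatible n (bword n a) w) {p : ℕ} (hp : p < w.length) :
    1 ≤ w.getD p 0 ∧ w.getD p 0 ≤ n := by
  have hmem : w.getD p 0 ∈ w := by
    rw [List.getD_eq_getElem _ _ hp]; exact List.getElem_mem hp
  exact hw.2.1 _ hmem

lemma pos_lt_length {n : ℕ} {a : Fin n → ℕ} {w : List ℕ}
    (hw : Compatible n (bword n a) w) (i : Fin n) {j : ℕ} (hj : j < a i) :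
    off a i + j < w.length := by
  rw [compat_length hw]
  have := off_add_le_total a i
  omega

lemma psi_val {n : ℕ} {a : Fin n → ℕ} {w : List ℕ}
    (hw : Compatible n (bword n a) w) (i : Fin n) (j : Fin (a i)) :
    (psi a w ⟨i, j⟩ : ℕ) + 1 = w.getD (off a i + (a i - 1 - (j : ℕ))) 0 := by
  have hai : 0 < a i := lt_of_le_of_lt (Nat.zero_le _) j.isLt
  have hp : off a i + (a i - 1 - (j : ℕ)) < w.length :=
    pos_lt_length hw i (by omega)
  have hbd := compat_getD_bounds hw hp
  show min (w.getD (off a i + (a i - 1 - (j : ℕ))) 0 - 1) (n - 1) + 1 = _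
  omega

lemma psi_sep {n : ℕ} {a : Fin n → ℕ} {w : List ℕ}
    (hw : Compatible n (bword n a) w) : RowsSeparated (psi a w) := by
  intro i i' h j j'
  have h1 := psi_val hw i j
  have h2 := psi_val hw i' j'
  have hc := compat_cross hw h
    (show a i - 1 - (j : ℕ) < a i by have := j.isLt; omega)
    (show a i' - 1 - (j' : ℕ) < a i' by have := j'.isLt; omega)
  rw [Fin.lt_def]
  omega

lemma psi_decr {n : ℕ} {a : Fin n → ℕ} {w : List ℕ}
    (hw : Compatible n (bword n a) w) : RowsWeakDecr (psi a w) := by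
  intro i j j' hjj
  have h1 := psi_val hw i j
  have h2 := psi_val hw i j'
  have hmono := getD_mono_of_step w hw.2.2.1
    (off a i + (a i - 1 - (j' : ℕ))) (off a i + (a i - 1 - (j : ℕ)))
    (by have : (j : ℕ) ≤ (j' : ℕ) := hjj; omega)
    (pos_lt_length hw i (by have := j.isLt; omega))
  rw [Fin.le_def]
  omega

lemma psi_first {n : ℕ} {a : Fin n → ℕ} {w : List ℕ}
    (hw : Compatible n (bword n a) w) (hf : FlagCond n a w) :
    FirstEntryRowIndex (psi a w) := by
  intro i h0
  have hv := psi_val hw i ⟨0, h0⟩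
  have hfi := (flagCond_iff a w).mp hf i (by omega)
  apply Fin.ext
  have : (i : ℕ) < n := i.isLt
  simp only [Fin.val_mk, Fin.val_zero, Nat.sub_zero] at hv ⊢
  omega

lemma phi_psi {n : ℕ} {a : Fin n → ℕ} {w : List ℕ}
    (hw : Compatible n (bword n a) w) : phi a (psi a w) = w := by
  apply List.ext_getElem
  · rw [phi_length, compat_length hw]
  · intro k h1 h2
    rw [phi_length] at h1
    obtain ⟨i, j, hj, rfl⟩ := exists_decomp' a k h1
    rw [← List.getD_eq_getElem _ 0, ← List.getD_eq_getElem _ 0]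
    rw [phi_getD a _ i hj]
    have := psi_val hw i ⟨a i - 1 - j, by omega⟩
    rw [this]
    congr 2
    simp only []
    omega

lemma psi_phi {n : ℕ} (a : Fin n → ℕ) (T : Filling n n a) : psi a (phi a T) = T := by
  funext b
  rcases b with ⟨i, j⟩
  apply Fin.ext
  have hj0 : a i - 1 - (j : ℕ) < a i := by have := j.isLt; omega
  show min ((phi a T).getD (off a i + (a i - 1 - (j : ℕ))) 0 - 1) (n - 1) = (T ⟨i, j⟩ : ℕ)
  rw [phi_getD a T i hj0]
  have hidx : (⟨a i - 1 - (a i - 1 - (j : ℕ)), by omega⟩ : Fin (a i)) = j := by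
    apply Fin.ext; have := j.isLt; simp only []; omega
  rw [hidx]
  have hlt : (T ⟨i, j⟩ : ℕ) < n := (T ⟨i, j⟩).isLt
  omega
lemma fill_congr {m n : ℕ} {c : Fin m → ℕ} (T : Filling m n c) (i : Fin m) {v v' : ℕ}
    (h : v = v') (hv : v < c i) (hv' : v' < c i) : T ⟨i, ⟨v, hv⟩⟩ = T ⟨i, ⟨v', hv'⟩⟩ := by
  subst h; rfl

lemma phi_flag {n : ℕ} (a : Fin n → ℕ) (T : Filling n n a)
    (hfirst : FirstEntryRowIndex T) : FlagCond n a (phi a T) := by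
  rw [flagCond_iff]
  intro i hi
  rw [phi_getD a T i (show a i - 1 < a i by omega)]
  rw [fill_congr T i (show a i - 1 - (a i - 1) = 0 by omega) _ (by omega)]
  rw [hfirst i (by omega)]

lemma phi_compat {n : ℕ} (a : Fin n → ℕ) (T : Filling n n a)
    (hdec : RowsWeakDecr T) (hfirst : FirstEntryRowIndex T) (hsep : RowsSeparated T) :
    Compatible n (bword n a) (phi a T) := by
  refine ⟨by rw [phi_length, bword_length], ?_, ?_, ?_, ?_⟩
  · intro x hx
    rw [phi, List.mem_flatMap] at hx
    obtain ⟨i, _, hxi⟩ := hx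
    rw [blockW, List.mem_ofFn] at hxi
    obtain ⟨j, rfl⟩ := hxi
    have := (T ⟨i, j.rev⟩).isLt
    show 1 ≤ (T ⟨i, j.rev⟩ : ℕ) + 1 ∧ (T ⟨i, j.rev⟩ : ℕ) + 1 ≤ n
    omega
  · intro k hk
    rw [phi_length] at hk
    obtain ⟨i, j, hj, rfl⟩ := exists_decomp' a k (by omega)
    obtain ⟨i2, j2, hj2, he2⟩ := exists_decomp' a (off a i + j + 1) hk
    rcases lt_trichotomy i2 i with hlt | heq | hgt
    · exfalso; have := off_add_le a hlt; omega
    · subst heq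
      have hj2e : j2 = j + 1 := by omega
      subst hj2e
      rw [he2, phi_getD a T i2 hj, phi_getD a T i2 hj2]
      have hle := hdec i2 ⟨a i2 - 1 - (j + 1), by omega⟩ ⟨a i2 - 1 - j, by omega⟩
        (by rw [Fin.mk_le_mk]; omega)
      rw [Fin.le_def] at hle
      omega
    · rw [he2, phi_getD a T i hj, phi_getD a T i2 hj2]
      have hlt := hsep i i2 hgt ⟨a i - 1 - j, by omega⟩ ⟨a i2 - 1 - j2, by omega⟩
      rw [Fin.lt_def] at hlt
      omega
  · intro k hk hb
    rw [bword_length] at hk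
    obtain ⟨i, j, hj, hke⟩ := exists_decomp' a k (by omega)
    obtain ⟨i2, j2, hj2, he2⟩ := exists_decomp' a (k + 1) hk
    rcases lt_trichotomy i2 i with hlt | heq | hgt
    · exfalso; rw [hke] at he2; have := off_add_le a hlt; omega
    · exfalso
      subst heq
      rw [he2, hke, bword_getD a i2 hj, bword_getD a i2 hj2] at hb
      omega
    · rw [he2, hke, phi_getD a T i hj, phi_getD a T i2 hj2]
      have hlt := hsep i i2 hgt ⟨a i - 1 - j, by omega⟩ ⟨a i2 - 1 - j2, by omega⟩
      rw [Fin.lt_def] at hlt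
      omega
  · intro k hk
    rw [bword_length] at hk
    obtain ⟨i, j, hj, rfl⟩ := exists_decomp' a k hk
    rw [phi_getD a T i hj, bword_getD a i hj]
    have h0 : 0 < a i := by omega
    have hle := hdec i ⟨0, h0⟩ ⟨a i - 1 - j, by omega⟩ (by rw [Fin.mk_le_mk]; omega)
    have hf := hfirst i h0
    rw [Fin.le_def] at hle
    have hfv : (T ⟨i, ⟨0, h0⟩⟩ : ℕ) = (i : ℕ) := by rw [hf]
    omega
lemma list_prod_flatMap {α : Type*} {M : Type*} [CommMonoid M] (l : List α) (f : α → List M) :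
    (l.flatMap f).prod = (l.map (fun x => (f x).prod)).prod := by
  induction l with
  | nil => simp
  | cons x r ih => simp [List.flatMap_cons, List.prod_append, ih]

lemma phi_mem {n : ℕ} (a : Fin n → ℕ) (T : Filling n n a) :
    ∀ x ∈ phi a T, 1 ≤ x ∧ x ≤ n := by
  intro x hx
  rw [phi, List.mem_flatMap] at hx
  obtain ⟨i, _, hxi⟩ := hx
  rw [blockW, List.mem_ofFn] at hxi
  obtain ⟨j, rfl⟩ := hxi
  have := (T ⟨i, j.rev⟩).isLt
  show 1 ≤ (T ⟨i, j.rev⟩ : ℕ) + 1 ∧ (T ⟨i, j.rev⟩ : ℕ) + 1 ≤ n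
  omega

lemma prod_X_pow_count (n : ℕ) (w : List ℕ) (hw : ∀ x ∈ w, 1 ≤ x ∧ x ≤ n) :
    ∏ i : Fin n, (X i : MvPolynomial (Fin n) ℤ) ^ (w.count ((i : ℕ) + 1))
      = (w.map (fun x =>
          if h : x - 1 < n then (X (⟨x - 1, h⟩ : Fin n) : MvPolynomial (Fin n) ℤ)
          else 1)).prod := by
  induction w with
  | nil => simp
  | cons x r ih =>
    obtain ⟨hx1, hxn⟩ := hw x List.mem_cons_self
    have hr : ∀ y ∈ r, 1 ≤ y ∧ y ≤ n := fun y hy => hw y (List.mem_cons_of_mem _ hy)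
    have hxlt : x - 1 < n := by omega
    rw [List.map_cons, List.prod_cons, ← ih hr, dif_pos hxlt]
    have hcount : ∀ i : Fin n, (x :: r).count ((i : ℕ) + 1)
        = r.count ((i : ℕ) + 1) + (if i = ⟨x - 1, hxlt⟩ then 1 else 0) := by
      intro i
      rw [List.count_cons]
      congr 1
      by_cases h : i = (⟨x - 1, hxlt⟩ : Fin n)
      · subst h
        simp only [Fin.val_mk, if_pos]
        · rw [if_pos]; rw [beq_iff_eq]; omega
      · rw [if_neg, if_neg h]
        rw [beq_iff_eq]
        intro hc
        apply h
        apply Fin.ext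
        simp only [Fin.val_mk]
        omega
    calc ∏ i : Fin n, (X i : MvPolynomial (Fin n) ℤ) ^ ((x :: r).count ((i : ℕ) + 1))
        = ∏ i : Fin n, ((X i : MvPolynomial (Fin n) ℤ) ^ (r.count ((i : ℕ) + 1))
            * (X i : MvPolynomial (Fin n) ℤ) ^ (if i = (⟨x - 1, hxlt⟩ : Fin n) then 1 else 0)) := by
          refine Finset.prod_congr rfl fun i _ => ?_
          rw [← pow_add, ← hcount i]
      _ = (∏ i : Fin n, (X i : MvPolynomial (Fin n) ℤ) ^ (r.count ((i : ℕ) + 1)))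
            * ∏ i : Fin n, (X i : MvPolynomial (Fin n) ℤ) ^ (if i = (⟨x - 1, hxlt⟩ : Fin n) then 1 else 0) :=
          Finset.prod_mul_distrib
      _ = _ := by
          rw [mul_comm]
          congr 1
          rw [Finset.prod_eq_single (⟨x - 1, hxlt⟩ : Fin n)]
          · rw [if_pos rfl, pow_one]
          · intro b _ hb
            rw [if_neg hb, pow_zero]
          · intro hmem
            exact absurd (Finset.mem_univ _) hmem

lemma fmono_phi {n : ℕ} (a : Fin n → ℕ) (T : Filling n n a) :
    fmono T = ∏ i : Fin n, (X i : MvPolynomial (Fin n) ℤ) ^ ((phi a T).count ((i : ℕ) + 1)) := by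
  rw [prod_X_pow_count n _ (phi_mem a T)]
  rw [phi, List.map_flatMap, list_prod_flatMap, ← Fin.prod_univ_def]
  have h1 : fmono T = ∏ i : Fin n, ∏ j : Fin (a i), (X (T ⟨i, j⟩) : MvPolynomial (Fin n) ℤ) := by
    rw [fmono, ← Finset.univ_sigma_univ, Finset.prod_sigma]
  rw [h1]
  refine Finset.prod_congr rfl fun i _ => ?_
  rw [blockW, List.map_ofFn, List.prod_ofFn]
  rw [← Equiv.prod_comp Fin.revPerm (fun j : Fin (a i) => (X (T ⟨i, j⟩) : MvPolynomial (Fin n) ℤ))]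
  refine Finset.prod_congr rfl fun j _ => ?_
  have ht : ((T ⟨i, j.rev⟩ : ℕ) + 1) - 1 < n := by
    have := (T ⟨i, j.rev⟩).isLt; omega
  show (X (T ⟨i, Fin.revPerm j⟩) : MvPolynomial (Fin n) ℤ)
      = if h : ((T ⟨i, j.rev⟩ : ℕ) + 1) - 1 < n then X (⟨((T ⟨i, j.rev⟩ : ℕ) + 1) - 1, h⟩ : Fin n) else 1
  rw [dif_pos ht]
  congr 1
theorem fparticle_flag_compatible (n : ℕ) (a : Fin n → ℕ) :
    fparticle n a =
      ∑ᶠ w ∈ {w : List ℕ | Compatible n (bword n a) w ∧ FlagCond n a w},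
        ∏ i : Fin n, X i ^ (w.count ((i : ℕ) + 1)) := by
  have hset : {w : List ℕ | Compatible n (bword n a) w ∧ FlagCond n a w}
      = phi a '' ↑(Finset.univ.filter (fun T : Filling n n a =>
          RowsWeakDecr T ∧ ColumnsDistinct T ∧ FirstEntryRowIndex T ∧ TriplesAB T ∧
            RowsSeparated T)) := by
    ext w
    simp only [Set.mem_setOf_eq, Set.mem_image, Finset.mem_coe, Finset.mem_filter,
      Finset.mem_univ, true_and]
    constructor
    · rintro ⟨hw, hf⟩
      exact ⟨psi a w, ⟨psi_decr hw, sep_imp_cd (psi_sep hw), psi_first hw hf,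
        sep_imp_tri (psi_sep hw), psi_sep hw⟩, phi_psi hw⟩
    · rintro ⟨T, hT, rfl⟩
      exact ⟨phi_compat a T hT.1 hT.2.2.1 hT.2.2.2.2, phi_flag a T hT.2.2.1⟩
  have hinj : Set.InjOn (phi a) ↑(Finset.univ.filter (fun T : Filling n n a =>
      RowsWeakDecr T ∧ ColumnsDistinct T ∧ FirstEntryRowIndex T ∧ TriplesAB T ∧
        RowsSeparated T)) := by
    intro T1 _ T2 _ h
    have := congrArg (psi a) h
    rwa [psi_phi, psi_phi] at this
  rw [hset, finsum_mem_image hinj, finsum_mem_coe_finset]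
  rw [fparticle, genfun]
  refine Finset.sum_congr ?_ fun T _ => fmono_phi a T
  apply Finset.filter_congr_decidable
end PaperYR
end
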